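/- arXiv:1404.2463 — 6 statements merged into one kernel-verified Lean document; each statement's English description precedes it below -/
import Mathlib

section
/- Let ρ > 1 and let f be analytic inside and on the Bernstein ellipse E_ρ. Then for every integer n ≥ 0, the n-th Chebyshev coefficient of the first kind of f satisfies a_n = (1/(π ρ^n)) ∫_0^{2π} f(½(ρe^{iθ} + (ρe^{iθ})^{-1})) e^{-inθ} dθ. -/
/-!
With `u = r e^{iθ}`, the integral `∫₀^{2π} f(½(u + u⁻¹)) e^{-inθ} dθ` is `-i rⁿ` times the
circle integral of `f(½(u + u⁻¹)) / u^{n+1}` over `|u| = r`. That integrand is holomorphic on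
the closed annulus `1 ≤ |u| ≤ ρ`, which the Joukowski map sends into `D̄_ρ`, so by Cauchy's
theorem the integral at `r = ρ` is `ρⁿ` times the one at `r = 1`. On the unit circle
`½(u + u⁻¹) = cos θ`: folding `[π, 2π]` onto `[0, π]` turns `e^{-inθ}` into `2 cos nθ`, and the
substitution `x = cos θ` turns `∫₀^π f(cos θ) cos nθ dθ` into `(π/2) aₙ`.
-/
open Complex Real MeasureTheory Polynomial

noncomputable section

/-- The point ½(u + u⁻¹) for u = r·e^{iθ}. -/
def joukowski (r θ : ℝ) : ℂ :=
  ((r : ℂ) * Complex.exp (θ * Complex.I) +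
    ((r : ℂ) * Complex.exp (θ * Complex.I))⁻¹) / 2

/-- The Bernstein ellipse E_ρ (the curve). -/
def bernsteinEllipse (ρ : ℝ) : Set ℂ := {z | ∃ θ : ℝ, z = joukowski ρ θ}

/-- The closed interior D̄_ρ of the Bernstein ellipse. -/
def bernsteinDisk (ρ : ℝ) : Set ℂ :=
  {z | ∃ r θ : ℝ, 1 ≤ r ∧ r ≤ ρ ∧ z = joukowski r θ}

/-- `f` is analytic inside and on the Bernstein ellipse `E_ρ`:
analytic on an open set containing the closed interior `D̄_ρ`. -/
def AnalyticOnBernstein (f : ℂ → ℂ) (ρ : ℝ) : Prop :=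
  ∃ U : Set ℂ, IsOpen U ∧ bernsteinDisk ρ ⊆ U ∧ ∀ z ∈ U, AnalyticAt ℂ f z

/-- The n-th Chebyshev coefficient of the first kind of f:
aₙ = (2/π) ∫_{-1}^1 f(x) Tₙ(x)/√(1-x²) dx. -/
def chebCoeffT (f : ℂ → ℂ) (n : ℕ) : ℂ :=
  (2 / π) * ∫ x in (-1:ℝ)..1,
    f x * ((Polynomial.Chebyshev.T ℝ n).eval x / Real.sqrt (1 - x ^ 2) : ℝ)

/-- The n-th Chebyshev coefficient of the second kind of f:
bₙ = (2/π) ∫_{-1}^1 √(1-x²) f(x) Uₙ(x) dx. -/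
def chebCoeffU (f : ℂ → ℂ) (n : ℕ) : ℂ :=
  (2 / π) * ∫ x in (-1:ℝ)..1,
    f x * ((Real.sqrt (1 - x ^ 2) * (Polynomial.Chebyshev.U ℝ n).eval x : ℝ))

/-- The m-point trapezoidal approximation aₙ(m,ρ) of the contour formula for aₙ. -/
def trapT (f : ℂ → ℂ) (ρ : ℝ) (n m : ℕ) : ℂ :=
  (2 / (m * ρ ^ n)) * ∑ j ∈ Finset.range m,
    f (joukowski ρ (2 * π * j / m)) * Complex.exp (-(2 * π * j * n / m) * Complex.I)

/-- The m-point trapezoidal approximation bₙ(m,ρ) of the contour formula for bₙ. -/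
def trapU (f : ℂ → ℂ) (ρ : ℝ) (n m : ℕ) : ℂ :=
  (1 / (m * ρ ^ n)) * ∑ j ∈ Finset.range m,
    f (joukowski ρ (2 * π * j / m)) *
      (1 - (ρ:ℂ)⁻¹ ^ 2 * Complex.exp (-(4 * π * j / m) * Complex.I)) *
      Complex.exp (-(2 * π * j * n / m) * Complex.I)

/-- The supremum norm ‖g‖_{E_ρ} of g on the Bernstein ellipse E_ρ. -/
def ellipseNorm (g : ℂ → ℂ) (ρ : ℝ) : ℝ :=
  sSup ((fun z => ‖g z‖) '' bernsteinEllipse ρ)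

/-- The polynomial s(z) = η₀/2 + ∑_{k=1}^{m-1} ηₖ Tₖ(z) of degree ≤ m−1 in Chebyshev form. -/
def chebPoly (η : ℕ → ℂ) (m : ℕ) (z : ℂ) : ℂ :=
  η 0 / 2 + ∑ k ∈ Finset.Icc 1 (m - 1), η k * (Polynomial.Chebyshev.T ℂ k).eval z

/-- M(ρ) = (1/π) ∫₀^{2π} |f(½(ρe^{iθ}+(ρe^{iθ})⁻¹))| dθ. -/
def Mfun (f : ℂ → ℂ) (ρ : ℝ) : ℝ :=
  (1 / π) * ∫ θ in (0:ℝ)..(2 * π), ‖f (joukowski ρ θ)‖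

theorem joukowski_one (θ : ℝ) : joukowski 1 θ = Real.cos θ := by
  simp only [joukowski, ofReal_one, one_mul, ← Complex.exp_neg, ofReal_cos, Complex.cos]
  ring_nf

theorem joukowski_norm_arg (u : ℂ) : joukowski ‖u‖ (arg u) = (u + u⁻¹) / 2 := by
  rw [joukowski, norm_mul_exp_arg_mul_I]

theorem ofReal_mem_bernsteinDisk {ρ x : ℝ} (hρ : 1 ≤ ρ) (hx : x ∈ Set.Icc (-1 : ℝ) 1) :
    (x : ℂ) ∈ bernsteinDisk ρ :=
  ⟨1, Real.arccos x, le_rfl, hρ, by rw [joukowski_one, Real.cos_arccos hx.1 hx.2]⟩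

theorem half_add_inv_mem_bernsteinDisk {ρ : ℝ} {u : ℂ} (h1 : 1 ≤ ‖u‖) (h2 : ‖u‖ ≤ ρ) :
    (u + u⁻¹) / 2 ∈ bernsteinDisk ρ :=
  ⟨‖u‖, arg u, h1, h2, (joukowski_norm_arg u).symm⟩

theorem AnalyticOnBernstein.differentiableAt {f : ℂ → ℂ} {ρ : ℝ} (hf : AnalyticOnBernstein f ρ)
    {z : ℂ} (hz : z ∈ bernsteinDisk ρ) : DifferentiableAt ℂ f z :=
  let ⟨_, _, hDU, hU⟩ := hf
  (hU z (hDU hz)).differentiableAt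

theorem Real.image_cos_Ioo_zero_pi : Real.cos '' Set.Ioo 0 π = Set.Ioo (-1) 1 := by
  simpa using Real.continuous_cos.continuousOn.image_Ioo_of_strictAntiOn pi_pos.le
    Real.strictAntiOn_cos

theorem integral_inv_sqrt_one_sub_sq_smul {E : Type*} [NormedAddCommGroup E] [NormedSpace ℝ E]
    (g : ℝ → E) :
    ∫ x in (-1 : ℝ)..1, (√(1 - x ^ 2))⁻¹ • g x = ∫ θ in (0 : ℝ)..π, g (Real.cos θ) := by
  have hsin : ∀ θ ∈ Set.Ioo 0 π,
      |-Real.sin θ| • (√(1 - Real.cos θ ^ 2))⁻¹ • g (Real.cos θ) = g (Real.cos θ) := by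
    intro θ hθ
    have hs : 0 < Real.sin θ := Real.sin_pos_of_pos_of_lt_pi hθ.1 hθ.2
    rw [← Real.sin_sq, Real.sqrt_sq hs.le, abs_neg, abs_of_pos hs, smul_smul,
      mul_inv_cancel₀ hs.ne', one_smul]
  rw [intervalIntegral.integral_of_le (by norm_num), integral_Ioc_eq_integral_Ioo,
    ← Real.image_cos_Ioo_zero_pi,
    integral_image_eq_integral_abs_deriv_smul measurableSet_Ioo
      (fun θ _ => (Real.hasDerivAt_cos θ).hasDerivWithinAt)
      (Real.injOn_cos.mono Set.Ioo_subset_Icc_self),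
    setIntegral_congr_fun measurableSet_Ioo hsin,
    intervalIntegral.integral_of_le pi_pos.le, integral_Ioc_eq_integral_Ioo]

theorem integral_zero_two_pi_eq_integral_add_reflect {E : Type*} [NormedAddCommGroup E]
    [NormedSpace ℝ E] {F : ℝ → E} (hF : IntervalIntegrable F volume 0 (2 * π)) :
    ∫ θ in (0 : ℝ)..(2 * π), F θ = ∫ θ in (0 : ℝ)..π, (F θ + F (2 * π - θ)) := by
  have hπ : π ∈ Set.uIcc 0 (2 * π) := Set.mem_uIcc_of_le pi_pos.le (by linarith [pi_pos])
  have hleft : IntervalIntegrable F volume 0 π := hF.mono_set (Set.uIcc_subset_uIcc_left hπ)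
  have hright : IntervalIntegrable F volume π (2 * π) :=
    hF.mono_set (Set.uIcc_subset_uIcc_right hπ)
  have hreflect : IntervalIntegrable (fun θ => F (2 * π - θ)) volume 0 π := by
    simpa [two_mul] using hright.symm.comp_sub_left (2 * π)
  rw [intervalIntegral.integral_add hleft hreflect, intervalIntegral.integral_comp_sub_left,
    ← intervalIntegral.integral_add_adjacent_intervals hleft hright]
  norm_num [two_mul]

theorem exp_add_exp_reflect_eq_two_cos (n : ℕ) (θ : ℝ) :
    exp (-(n * θ) * I) + exp (-(n * ↑(2 * π - θ)) * I) = 2 * (Real.cos (n * θ) : ℂ) := by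
  have hperiod : exp (-(n * ↑(2 * π - θ)) * I) = exp ((n * θ) * I) := by
    rw [show -(n * ↑(2 * π - θ)) * I = (n * θ) * I + (-n : ℤ) * (2 * π * I) by push_cast; ring,
      Complex.exp_add, exp_int_mul_two_pi_mul_I, mul_one]
  rw [hperiod, ofReal_cos, Complex.cos]
  push_cast
  ring_nf

def joukowskiMoment (f : ℂ → ℂ) (r : ℝ) (n : ℕ) : ℂ :=
  ∫ θ in (0:ℝ)..(2 * π), f (joukowski r θ) * Complex.exp (-((n : ℂ) * (θ : ℂ)) * Complex.I)

theorem joukowskiMoment_one (f : ℂ → ℂ) (n : ℕ)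
    (hf : ∀ x ∈ Set.Icc (-1 : ℝ) 1, ContinuousAt f x) :
    joukowskiMoment f 1 n = π * chebCoeffT f n := by
  have hcont : Continuous fun θ : ℝ => f (Real.cos θ) := continuous_iff_continuousAt.2
    fun θ => (hf _ ⟨Real.neg_one_le_cos θ, Real.cos_le_one θ⟩).comp
      (f := fun θ : ℝ => ((Real.cos θ : ℝ) : ℂ)) (by fun_prop)
  have hreflect : ∀ θ : ℝ,
      f (Real.cos θ) * exp (-(n * θ) * I) + f (Real.cos (2 * π - θ)) * exp (-(n * ↑(2 * π - θ)) * I)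
        = 2 * (f (Real.cos θ) * (Real.cos (n * θ) : ℂ)) := by
    intro θ
    rw [Real.cos_two_pi_sub, ← mul_add, exp_add_exp_reflect_eq_two_cos]
    ring
  have hT : ∀ x : ℝ, f x * ((Chebyshev.T ℝ n).eval x / √(1 - x ^ 2) : ℝ)
      = (√(1 - x ^ 2))⁻¹ • (f x * (((Chebyshev.T ℝ n).eval x : ℝ) : ℂ)) := by
    intro x
    rw [real_smul]
    push_cast
    ring
  calc joukowskiMoment f 1 n
      = ∫ θ in (0 : ℝ)..(2 * π), f (Real.cos θ) * exp (-(n * θ) * I) := by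
        simp only [joukowskiMoment, joukowski_one]
    _ = ∫ θ in (0 : ℝ)..π, 2 * (f (Real.cos θ) * (Real.cos (n * θ) : ℂ)) := by
        rw [integral_zero_two_pi_eq_integral_add_reflect
          (F := fun θ => f (Real.cos θ) * exp (-(n * θ) * I))
          ((hcont.mul (by fun_prop)).intervalIntegrable _ _)]
        simp only [hreflect]
    _ = π * chebCoeffT f n := by
        rw [chebCoeffT, intervalIntegral.integral_congr (fun x _ => hT x),
          integral_inv_sqrt_one_sub_sq_smul, intervalIntegral.integral_const_mul]
        simp only [Chebyshev.T_real_cos]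
        field_simp [ofReal_ne_zero.2 pi_ne_zero]
        norm_cast

theorem circleIntegral_joukowski_div_pow (f : ℂ → ℂ) (n : ℕ) {r : ℝ} (hr : 0 < r) :
    (∮ u in C(0, r), f ((u + u⁻¹) / 2) / u ^ (n + 1)) = I * joukowskiMoment f r n / r ^ n := by
  rw [circleIntegral, joukowskiMoment, ← intervalIntegral.integral_const_mul,
    ← intervalIntegral.integral_div]
  refine intervalIntegral.integral_congr fun θ _ => ?_
  have hexp : exp (-(n * θ) * I) = (exp (θ * I) ^ n)⁻¹ := by
    rw [← Complex.exp_nat_mul, ← Complex.exp_neg]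
    ring_nf
  simp only [deriv_circleMap, circleMap, zero_add, smul_eq_mul, joukowski, hexp]
  field_simp [Complex.exp_ne_zero, ofReal_ne_zero.2 hr.ne']
  ring

theorem joukowskiMoment_div_pow_eq (f : ℂ → ℂ) (n : ℕ) {r R : ℝ} (hr : 0 < r) (hrR : r ≤ R)
    (hf : ∀ u : ℂ, r ≤ ‖u‖ → ‖u‖ ≤ R → DifferentiableAt ℂ f ((u + u⁻¹) / 2)) :
    joukowskiMoment f R n / R ^ n = joukowskiMoment f r n / r ^ n := by
  have hdiff : ∀ u : ℂ, r ≤ ‖u‖ → ‖u‖ ≤ R →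
      DifferentiableAt ℂ (fun u => f ((u + u⁻¹) / 2) / u ^ (n + 1)) u := by
    intro u h1 h2
    have hu : u ≠ 0 := norm_pos_iff.1 (hr.trans_le h1)
    have hjoukowski : DifferentiableAt ℂ (fun u : ℂ => (u + u⁻¹) / 2) u :=
      (differentiableAt_id.add (differentiableAt_inv hu)).div_const 2
    exact ((hf u h1 h2).comp u hjoukowski).div (differentiableAt_pow _) (pow_ne_zero _ hu)
  have hcircle := circleIntegral_eq_of_differentiable_on_annulus_off_countable (c := 0) hr hrR
    Set.countable_empty
    (fun u hu =>
      (hdiff u (by simpa using hu.2) (by simpa using hu.1)).continuousAt.continuousWithinAt)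
    (fun u hu => hdiff u (le_of_lt (by simpa using hu.1.2)) (le_of_lt (by simpa using hu.1.1)))
  rw [circleIntegral_joukowski_div_pow f n (hr.trans_le hrR),
    circleIntegral_joukowski_div_pow f n hr, mul_div_assoc, mul_div_assoc] at hcircle
  exact mul_left_cancel₀ I_ne_zero hcircle

/-- contour-integral expression for the Chebyshev coefficients
of the first kind of a function analytic inside and on the Bernstein ellipse. -/
theorem chebyshev_first_kind_contour_integral
    (ρ : ℝ) (hρ : 1 < ρ) (f : ℂ → ℂ) (hf : AnalyticOnBernstein f ρ) (n : ℕ) :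
    chebCoeffT f n = (1 / ((π : ℂ) * (ρ : ℂ) ^ n)) *
      ∫ θ in (0:ℝ)..(2 * π),
        f (joukowski ρ θ) * Complex.exp (-((n : ℂ) * (θ : ℂ)) * Complex.I) := by
  have hmoment := joukowskiMoment_div_pow_eq f n one_pos hρ.le
    fun u h1 h2 => hf.differentiableAt (half_add_inv_mem_bernsteinDisk h1 h2)
  rw [joukowskiMoment_one f n
    fun x hx => (hf.differentiableAt (ofReal_mem_bernsteinDisk hρ.le hx)).continuousAt] at hmoment
  change _ = _ * joukowskiMoment f ρ n
  have hρn : (ρ : ℂ) ^ n ≠ 0 := pow_ne_zero _ (ofReal_ne_zero.2 (by linarith))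
  rw [ofReal_one, one_pow, div_one, div_eq_iff hρn] at hmoment
  rw [hmoment]
  field_simp [ofReal_ne_zero.2 pi_ne_zero]
end
end

section
/- Let ρ > 1 and let f be a polynomial of degree n. Then for every integer k ≥ 0 and every m ≥ k + n + 1, the m-point trapezoidal rule computes the k-th Chebyshev coefficient of the first kind of f exactly: a_k(m,ρ) = a_k. In particular, if m ≥ 2n + 1, then a_k(m,ρ) = a_k for all 0 ≤ k ≤ n. -/
/-!
Both sides are linear in the polynomial and `T₀, …, Tₙ` span the polynomials of degree `≤ n`, so it
suffices to take `p = T_l` with `l ≤ n`. By orthogonality `a_k(T_l) = [l = k] + [l + k = 0]`. On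
the ellipse `T_l(½(u + u⁻¹)) = ½(u^l + u^(-l))`, so the trapezoidal sum for `T_l` reduces to sums
`∑ⱼ ωʲᵈ` over the `m`-th roots of unity with `d = l - k` and `d = -(l + k)`. Such a sum vanishes
unless `m ∣ d`, and `m > l + k` leaves only `d = 0`, which gives the same value.
-/

open Complex Real MeasureTheory Polynomial

noncomputable section

open Polynomial.Chebyshev Finset

namespace Polynomial.Chebyshev

theorem two_mul_eval_T_of_mul_eq_one {R : Type*} [CommRing R] {x y z : R} (hxy : x * y = 1)
    (hz : 2 * z = x + y) (n : ℕ) : 2 * (T R n).eval z = x ^ n + y ^ n := by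
  have := congrArg (eval z) (C_comp_two_mul_X R n)
  rw [eval_comp, eval_mul, eval_X, eval_ofNat, hz, ← dickson_one_one_eq_chebyshev_C,
    dickson_one_one_eval_add_inv x y hxy, eval_mul, eval_ofNat] at this
  exact this.symm

theorem integral_eval_T_real_measureT (n : ℤ) :
    ∫ x, (T ℝ n).eval x ∂measureT = if n = 0 then π else 0 := by
  split_ifs with hn
  · subst hn; exact integral_eval_T_real_measureT_zero
  · exact integral_eval_T_real_measureT_of_ne_zero hn

theorem integral_eval_T_real_mul_eval_T_real_measureT_nat (l k : ℕ) :
    ∫ x, (T ℝ l).eval x * (T ℝ k).eval x ∂measureT =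
      π / 2 * ((if l = k then 1 else 0) + (if l + k = 0 then 1 else 0)) := by
  rw [integral_eval_T_real_mul_eval_T_real_measureT, integral_eval_T_real_measureT,
    integral_eval_T_real_measureT]
  simp only [sub_eq_zero, Nat.cast_inj]
  split_ifs <;> first | omega | ring

end Polynomial.Chebyshev

namespace IsPrimitiveRoot

variable {K : Type*} [Field K] {ζ : K} {m : ℕ}

theorem sum_pow_zpow (hζ : IsPrimitiveRoot ζ m) (d : ℤ) :
    ∑ j ∈ range m, (ζ ^ j) ^ d = if (m : ℤ) ∣ d then (m : K) else 0 := by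
  have hswap : ∀ j : ℕ, (ζ ^ j) ^ d = (ζ ^ d) ^ j := fun j => by
    rw [← zpow_natCast, ← zpow_natCast, ← zpow_mul, ← zpow_mul, mul_comm]
  simp only [hswap]
  split_ifs with hdvd
  · simp [(hζ.zpow_eq_one_iff_dvd d).mpr hdvd]
  · have hne : ζ ^ d - 1 ≠ 0 := sub_ne_zero.mpr (mt (hζ.zpow_eq_one_iff_dvd d).mp hdvd)
    have hpow : (ζ ^ d) ^ m = 1 := by
      rw [← zpow_natCast, ← zpow_mul, mul_comm, zpow_mul, zpow_natCast, hζ.pow_eq_one,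
        one_zpow]
    have := geom_sum_mul (ζ ^ d) m
    rw [hpow, sub_self] at this
    exact (mul_eq_zero.mp this).resolve_right hne

theorem sum_pow_zpow_of_abs_lt (hζ : IsPrimitiveRoot ζ m) {d : ℤ} (hd : |d| < m) :
    ∑ j ∈ range m, (ζ ^ j) ^ d = if d = 0 then (m : K) else 0 := by
  rw [hζ.sum_pow_zpow]
  exact if_congr ⟨fun h => Int.eq_zero_of_abs_lt_dvd h hd, fun h => h ▸ dvd_zero _⟩ rfl rfl

end IsPrimitiveRoot

theorem trapT_eq_sum_rootsOfUnity (f : ℂ → ℂ) (ρ : ℝ) (k m : ℕ) :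
    trapT f ρ k m = 2 / (m * ρ ^ k) * ∑ j ∈ range m,
      f ((ρ * cexp (2 * π * I / m) ^ j + (ρ * cexp (2 * π * I / m) ^ j)⁻¹) / 2) *
        ((cexp (2 * π * I / m) ^ j) ^ k)⁻¹ := by
  unfold trapT joukowski
  congr 1
  refine sum_congr rfl fun j _ => ?_
  rw [← Complex.exp_nat_mul, ← Complex.exp_nat_mul, ← Complex.exp_neg]
  congr 3 <;> push_cast <;> ring_nf

theorem trapT_eval_T {ρ : ℝ} (hρ : ρ ≠ 0) {l k m : ℕ} (hm : l + k < m) :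
    trapT (fun z => (T ℂ l).eval z) ρ k m =
      (if l = k then 1 else 0) + (if l + k = 0 then 1 else 0) := by
  have hm0 : m ≠ 0 := by omega
  set ω := cexp (2 * π * I / m)
  have hω := Complex.isPrimitiveRoot_exp m hm0
  have hρ' : (ρ : ℂ) ≠ 0 := by exact_mod_cast hρ
  have hterm : ∀ j ∈ range m,
      (T ℂ l).eval ((ρ * ω ^ j + (ρ * ω ^ j)⁻¹) / 2) * ((ω ^ j) ^ k)⁻¹ =
      ((ρ : ℂ) ^ l * (ω ^ j) ^ ((l : ℤ) - k) +
        (ρ : ℂ)⁻¹ ^ l * (ω ^ j) ^ (-((l + k : ℕ) : ℤ))) / 2 := by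
    intro j _
    have hζ : ω ^ j ≠ 0 := pow_ne_zero _ (hω.ne_zero hm0)
    generalize ω ^ j = ζ at hζ ⊢
    have h2 := two_mul_eval_T_of_mul_eq_one (mul_inv_cancel₀ (mul_ne_zero hρ' hζ))
      (z := (ρ * ζ + (ρ * ζ)⁻¹) / 2) (by ring) l
    rw [zpow_sub₀ hζ, zpow_neg, zpow_natCast, zpow_natCast, zpow_natCast, pow_add,
      (eq_div_iff two_ne_zero).mpr ((mul_comm _ _).trans h2), mul_pow, inv_pow, mul_pow]
    ring
  rw [trapT_eq_sum_rootsOfUnity, sum_congr rfl hterm, ← sum_div, sum_add_distrib, ← mul_sum,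
    ← mul_sum, hω.sum_pow_zpow_of_abs_lt (by rw [abs_lt]; omega),
    hω.sum_pow_zpow_of_abs_lt (by rw [abs_neg, abs_lt]; omega)]
  simp only [sub_eq_zero, Nat.cast_inj, neg_eq_zero, Nat.cast_eq_zero]
  rcases eq_or_ne l k with rfl | hlk
  · rcases eq_or_ne l 0 with rfl | hl
    · field_simp
      norm_num
    · rw [if_pos rfl, if_pos rfl, if_neg (by omega), if_neg (by omega)]
      simp only [mul_zero, add_zero]
      field_simp
  · rw [if_neg hlk, if_neg hlk, if_neg (by omega), if_neg (by omega)]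
    simp

theorem intervalIntegrable_eval_mul_chebyshevWeight (p : ℂ[X]) (k : ℕ) :
    IntervalIntegrable (fun x : ℝ => p.eval (x : ℂ) * (((T ℝ k).eval x / √(1 - x ^ 2) : ℝ) : ℂ))
      volume (-1) 1 := by
  have hw : IntervalIntegrable (fun x : ℝ => (T ℝ k).eval x / √(1 - x ^ 2)) volume (-1) 1 := by
    simpa only [Real.sqrt_inv, div_eq_mul_inv] using
      intervalIntegrable_sqrt_one_sub_sq_inv.continuousOn_mul (T ℝ k).continuous.continuousOn
  exact IntervalIntegrable.continuousOn_mul ⟨hw.1.ofReal, hw.2.ofReal⟩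
    (p.continuous.comp continuous_ofReal).continuousOn

theorem chebCoeffT_eval_T (l k : ℕ) :
    chebCoeffT (fun z => (T ℂ l).eval z) k =
      (if l = k then 1 else 0) + (if l + k = 0 then 1 else 0) := by
  -- Mathlib's weight `√(1 - x ^ 2)⁻¹` parses as `√((1 - x ^ 2)⁻¹)`.
  have hintegrand : ∀ x : ℝ,
      (T ℂ l).eval (x : ℂ) * (((T ℝ k).eval x / √(1 - x ^ 2) : ℝ) : ℂ) =
      (((T ℝ l).eval x * (T ℝ k).eval x * √(1 - x ^ 2)⁻¹ : ℝ) : ℂ) := fun x => by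
    rw [← complex_ofReal_eval_T, Real.sqrt_inv]
    push_cast
    ring
  simp only [chebCoeffT, hintegrand, intervalIntegral.integral_ofReal, ← integral_measureT,
    integral_eval_T_real_mul_eval_T_real_measureT_nat]
  have hπ : (π : ℂ) ≠ 0 := by exact_mod_cast Real.pi_ne_zero
  split_ifs <;> push_cast <;> field_simp

def chebCoeffTₗ (k : ℕ) : ℂ[X] →ₗ[ℂ] ℂ where
  toFun p := chebCoeffT (fun z => p.eval z) k
  map_add' p q := by
    simp only [chebCoeffT, eval_add, add_mul, ← mul_add, intervalIntegral.integral_add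
      (intervalIntegrable_eval_mul_chebyshevWeight p k)
      (intervalIntegrable_eval_mul_chebyshevWeight q k)]
  map_smul' c p := by
    simp only [chebCoeffT, eval_smul, smul_eq_mul, mul_assoc, intervalIntegral.integral_const_mul,
      RingHom.id_apply]
    ring

def trapTₗ (ρ : ℝ) (k m : ℕ) : ℂ[X] →ₗ[ℂ] ℂ where
  toFun p := trapT (fun z => p.eval z) ρ k m
  map_add' p q := by simp only [trapT, eval_add, add_mul, sum_add_distrib, mul_add]
  map_smul' c p := by
    simp only [trapT, eval_smul, smul_eq_mul, mul_assoc, ← mul_sum, RingHom.id_apply]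
    ring

theorem trapT_eval_eq_chebCoeffT {ρ : ℝ} (hρ : ρ ≠ 0) (p : ℂ[X]) {k m : ℕ}
    (hm : p.natDegree + k < m) :
    trapT (fun z => p.eval z) ρ k m = chebCoeffT (fun z => p.eval z) k := by
  have hspan : p ∈ Submodule.span ℂ (chebyshevTsequence ℂ '' Set.Iio (p.natDegree + 1)) := by
    rw [Sequence.span_degreeLT _ fun i _ => by simp [chebyshevTsequence, leadingCoeff_T],
      mem_degreeLT]
    exact (degree_le_natDegree).trans_lt (by exact_mod_cast Nat.lt_succ_self _)
  refine LinearMap.eqOn_span' (f := trapTₗ ρ k m) (g := chebCoeffTₗ k) ?_ hspan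
  rintro _ ⟨l, hl, rfl⟩
  exact (trapT_eval_T hρ (by have := Set.mem_Iio.mp hl; omega)).trans (chebCoeffT_eval_T l k).symm

/-- the trapezoidal rule computes the Chebyshev coefficients of the
first kind of a polynomial of degree n exactly, provided m ≥ k + n + 1; in
particular all of them for 0 ≤ k ≤ n are exact once m ≥ 2n + 1. -/
theorem trapezoidal_exact_for_polynomials_first_kind
    (ρ : ℝ) (hρ : 1 < ρ) (n : ℕ) (p : Polynomial ℂ) (hp : p.natDegree = n) :
    (∀ k m : ℕ, m ≥ k + n + 1 →
      trapT (fun z => p.eval z) ρ k m = chebCoeffT (fun z => p.eval z) k) ∧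
    (∀ m : ℕ, m ≥ 2 * n + 1 → ∀ k : ℕ, k ≤ n →
      trapT (fun z => p.eval z) ρ k m = chebCoeffT (fun z => p.eval z) k) := by
  have hexact : ∀ k m : ℕ, m ≥ k + n + 1 →
      trapT (fun z => p.eval z) ρ k m = chebCoeffT (fun z => p.eval z) k := fun k m hm =>
    trapT_eval_eq_chebCoeffT (zero_lt_one.trans hρ).ne' p (by omega)
  exact ⟨hexact, fun m hm k hk => hexact k m (by omega)⟩
end
end

section
/- Let ρ > 1 and let f be a polynomial of degree n. Then for every integer k ≥ 0 and every m ≥ k + n + 3, the m-point trapezoidal rule computes the k-th Chebyshev coefficient of the second kind of f exactly: b_k(m,ρ) = b_k. In particular, if m ≥ 2n + 3, then b_k(m,ρ) = b_k for all 0 ≤ k ≤ n. -/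
open Complex Real MeasureTheory Polynomial

noncomputable section

/-!
Both sides are `ℂ`-linear in the polynomial and `U₀, …, Uₙ` span the polynomials of degree `≤ n`,
so it suffices to treat `p = U_d` with `d ≤ n`. The exact coefficients of `U_d` are `δ_{kd}` by the
orthogonality of the `U_k` for the weight `√(1 - x²)` (substitute `x = cos θ`). For the
trapezoidal sum, write the `j`-th node as `(u + u⁻¹) / 2` with `u = ρ ζ^j`, `ζ = e^{2πi/m}`: the
identity `U_d((u + u⁻¹) / 2) (1 - u⁻²) = u^d - u^{-(d+2)}` turns the sum into two geometric sums
over `m`-th roots of unity, with exponents `d - k` and `-(d + k + 2)`. Both have absolute value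
`< m` when `m ≥ k + d + 3`, so only the first survives, and only for `k = d`.
-/

open Polynomial.Chebyshev

namespace Polynomial.Chebyshev

theorem U_eval_half_add_inv_mul_one_sub_inv_sq {K : Type*} [Field K] [NeZero (2 : K)] {u : K}
    (hu : u ≠ 0) (d : ℕ) :
    (U K d).eval ((u + u⁻¹) / 2) * (1 - u⁻¹ ^ 2) = u ^ d - u⁻¹ ^ (d + 2) := by
  have h2 : (2 : K) * 2⁻¹ = 1 := mul_inv_cancel₀ two_ne_zero
  have hinv : u * u⁻¹ = 1 := mul_inv_cancel₀ hu
  induction d using Nat.twoStepInduction with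
  | zero => simp
  | one =>
    simp only [Nat.cast_one, U_one, eval_mul, eval_ofNat, eval_X]
    linear_combination (u + u⁻¹) * (1 - u⁻¹ ^ 2) * h2 - u⁻¹ * hinv
  | more d ih₀ ih₁ =>
    push_cast at ih₁ ⊢
    simp only [U_add_two, eval_sub, eval_mul, eval_ofNat, eval_X]
    linear_combination (u + u⁻¹) * ih₁ - ih₀
      + (u + u⁻¹) * (U K (d + 1)).eval ((u + u⁻¹) / 2) * (1 - u⁻¹ ^ 2) * h2
      + (u ^ d - u⁻¹ ^ (d + 2)) * hinv

theorem span_U_image_Iic {K : Type*} [Field K] [NeZero (2 : K)] (n : ℕ) :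
    Submodule.span K ((fun i : ℕ => U K i) '' Set.Iic n) = degreeLE K n := by
  let S : Polynomial.Sequence K := ⟨fun i => U K i, degree_U_natCast K⟩
  exact S.span_degreeLE fun i _ => by simp [S, two_ne_zero]

end Polynomial.Chebyshev

theorem IsPrimitiveRoot.sum_range_zpow_pow {K : Type*} [Field K] {ζ : K} {m : ℕ}
    (hζ : IsPrimitiveRoot ζ m) (l : ℤ) :
    ∑ j ∈ Finset.range m, (ζ ^ l) ^ j = if (m : ℤ) ∣ l then (m : K) else 0 := by
  split_ifs with hl
  · simp [(hζ.zpow_eq_one_iff_dvd l).2 hl]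
  · have hne : ζ ^ l ≠ 1 := fun h => hl ((hζ.zpow_eq_one_iff_dvd l).1 h)
    rw [geom_sum_eq hne, ← zpow_natCast, ← zpow_mul, mul_comm, zpow_mul, zpow_natCast,
      hζ.pow_eq_one, one_zpow, sub_self, zero_div]

theorem trapU_summand_U_eq {ρ : ℝ} (hρ : ρ ≠ 0) (d k m j : ℕ) :
    let ζ := Complex.exp (2 * π * Complex.I / m)
    (U ℂ d).eval (joukowski ρ (2 * π * j / m)) *
        (1 - (ρ : ℂ)⁻¹ ^ 2 * Complex.exp (-(4 * π * j / m) * Complex.I)) *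
        Complex.exp (-(2 * π * j * k / m) * Complex.I) =
      (ρ : ℂ) ^ d * (ζ ^ ((d : ℤ) - k)) ^ j -
        (ρ : ℂ)⁻¹ ^ (d + 2) * (ζ ^ (-((d + k + 2 : ℕ) : ℤ))) ^ j := by
  intro ζ
  set v := ζ ^ j
  have hv : v ≠ 0 := pow_ne_zero _ (Complex.exp_ne_zero _)
  have hexp : ∀ c : ℕ, Complex.exp (-(2 * π * j * c / m) * Complex.I) = v⁻¹ ^ c := by
    intro c
    rw [show v⁻¹ ^ c = Complex.exp (-(c * (j * (2 * π * Complex.I / m)))) by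
      rw [Complex.exp_neg, Complex.exp_nat_mul, Complex.exp_nat_mul, inv_pow]]
    congr 1
    ring
  have hnode : ((2 * π * j / m : ℝ) : ℂ) * Complex.I = j * (2 * π * Complex.I / m) := by
    push_cast; ring
  have hjouk : joukowski ρ (2 * π * j / m) = ((ρ * v) + (ρ * v)⁻¹) / 2 := by
    rw [joukowski, hnode, Complex.exp_nat_mul]
  have hsq : (ρ : ℂ)⁻¹ ^ 2 * Complex.exp (-(4 * π * j / m) * Complex.I) = (ρ * v)⁻¹ ^ 2 := by
    rw [show (4 * π * j / m : ℂ) = 2 * π * j * (2 : ℕ) / m by push_cast; ring, hexp, mul_inv,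
      mul_pow]
  have hρv : (ρ : ℂ) * v ≠ 0 := mul_ne_zero (Complex.ofReal_ne_zero.2 hρ) hv
  have hpow : ∀ l : ℤ, (ζ ^ l) ^ j = v ^ l := fun l => by
    rw [← zpow_natCast, ← zpow_mul, mul_comm, zpow_mul, zpow_natCast]
  rw [hjouk, hsq, U_eval_half_add_inv_mul_one_sub_inv_sq hρv, hexp, hpow, hpow, zpow_sub₀ hv,
    zpow_neg, zpow_natCast, zpow_natCast, zpow_natCast]
  ring

theorem trapU_U {ρ : ℝ} (hρ : ρ ≠ 0) {d k m : ℕ} (hm : k + d + 3 ≤ m) :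
    trapU (fun z => (U ℂ d).eval z) ρ k m = if k = d then 1 else 0 := by
  have hm0 : m ≠ 0 := by omega
  have hζ := Complex.isPrimitiveRoot_exp m hm0
  have hdiff : (m : ℤ) ∣ (d : ℤ) - k ↔ k = d := by
    refine ⟨fun h => ?_, fun h => by simp [h]⟩
    have := Int.eq_zero_of_abs_lt_dvd h (by rw [abs_lt]; omega)
    omega
  have hsum : ¬ (m : ℤ) ∣ -((d + k + 2 : ℕ) : ℤ) := by
    rw [Int.dvd_neg, Int.natCast_dvd_natCast]
    exact fun h => absurd (Nat.le_of_dvd (by omega) h) (by omega)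
  simp only [trapU, trapU_summand_U_eq hρ, Finset.sum_sub_distrib, ← Finset.mul_sum,
    hζ.sum_range_zpow_pow, hdiff, if_neg hsum]
  split_ifs with hkd
  · subst hkd
    have : (ρ : ℂ) ^ k ≠ 0 := pow_ne_zero _ (Complex.ofReal_ne_zero.2 hρ)
    field_simp
    ring
  · simp

theorem integral_cos_int_mul_of_ne_zero {n : ℤ} (hn : n ≠ 0) :
    ∫ θ in (0 : ℝ)..π, Real.cos (n * θ) = 0 := by
  have hn' : (n : ℝ) ≠ 0 := Int.cast_ne_zero.2 hn
  rw [intervalIntegral.integral_comp_mul_left (fun θ => Real.cos θ) hn', integral_cos,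
    Real.sin_int_mul_pi, mul_zero, Real.sin_zero, sub_zero, smul_zero]

theorem integral_sin_nat_mul_mul_sin_nat_mul {a b : ℕ} (hab : a + b ≠ 0) :
    ∫ θ in (0 : ℝ)..π, Real.sin (a * θ) * Real.sin (b * θ) = if a = b then π / 2 else 0 := by
  have hprod : ∀ θ : ℝ, Real.sin (a * θ) * Real.sin (b * θ) =
      (Real.cos (((a - b : ℤ) : ℝ) * θ) - Real.cos (((a + b : ℤ) : ℝ) * θ)) / 2 := fun θ => by
    rw [show ((a - b : ℤ) : ℝ) * θ = a * θ - b * θ by push_cast; ring,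
      show ((a + b : ℤ) : ℝ) * θ = a * θ + b * θ by push_cast; ring,
      ← Real.two_mul_sin_mul_sin]
    ring
  have hint : ∀ c : ℝ, IntervalIntegrable (fun θ => Real.cos (c * θ)) volume 0 π :=
    fun c => (by fun_prop : Continuous fun θ => Real.cos (c * θ)).intervalIntegrable _ _
  simp_rw [hprod]
  rw [intervalIntegral.integral_div, intervalIntegral.integral_sub (hint _) (hint _),
    integral_cos_int_mul_of_ne_zero (n := a + b) (by omega), sub_zero]
  split_ifs with h
  · simp [h]
  · rw [integral_cos_int_mul_of_ne_zero (by omega), zero_div]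

theorem integral_sqrt_one_sub_sq_mul_U_mul_U (d k : ℕ) :
    ∫ x in (-1 : ℝ)..1, √(1 - x ^ 2) * ((U ℝ d).eval x * (U ℝ k).eval x) =
      if d = k then π / 2 else 0 := by
  -- also where `1 - x ^ 2 ≤ 0`: there both sides are junk zeros
  have hweight : ∀ x : ℝ, √(1 - x ^ 2) = (1 - x ^ 2) * √(1 - x ^ 2)⁻¹ := fun x => by
    rw [Real.sqrt_inv, ← div_eq_mul_inv, Real.div_sqrt]
  calc ∫ x in (-1 : ℝ)..1, √(1 - x ^ 2) * ((U ℝ d).eval x * (U ℝ k).eval x)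
      = ∫ x, (1 - x ^ 2) * ((U ℝ d).eval x * (U ℝ k).eval x) ∂measureT := by
        rw [integral_measureT]
        congr 1 with x
        rw [hweight]
        ring
    _ = ∫ θ in (0 : ℝ)..π, Real.sin ((d + 1 : ℕ) * θ) * Real.sin ((k + 1 : ℕ) * θ) := by
        rw [integral_measureT_eq_integral_cos]
        congr 1 with θ
        have hd := U_real_cos θ d
        have hk := U_real_cos θ k
        push_cast at hd hk ⊢
        rw [← Real.sin_sq, ← hd, ← hk]
        ring
    _ = if d = k then π / 2 else 0 := by
        rw [integral_sin_nat_mul_mul_sin_nat_mul (by omega)]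
        simp

theorem chebCoeffU_U (d k : ℕ) :
    chebCoeffU (fun z => (U ℂ d).eval z) k = if k = d then 1 else 0 := by
  have hreal : ∀ x : ℝ, (U ℂ d).eval (x : ℂ) * ((√(1 - x ^ 2) * (U ℝ k).eval x : ℝ) : ℂ) =
      ((√(1 - x ^ 2) * ((U ℝ d).eval x * (U ℝ k).eval x) : ℝ) : ℂ) := fun x => by
    rw [← complex_ofReal_eval_U]
    push_cast
    ring
  simp only [chebCoeffU, hreal, intervalIntegral.integral_ofReal,
    integral_sqrt_one_sub_sq_mul_U_mul_U, eq_comm (a := k)]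
  split_ifs
  · push_cast
    field_simp
  · simp

theorem intervalIntegrable_chebCoeffU_integrand (p : ℂ[X]) (k : ℕ) :
    IntervalIntegrable
      (fun x : ℝ => p.eval (x : ℂ) * ((√(1 - x ^ 2) * (U ℝ k).eval x : ℝ) : ℂ))
      volume (-1) 1 :=
  (by fun_prop : Continuous _).intervalIntegrable _ _

def trapULinear (ρ : ℝ) (k m : ℕ) : ℂ[X] →ₗ[ℂ] ℂ where
  toFun p := trapU (fun z => p.eval z) ρ k m
  map_add' p q := by
    simp only [trapU, eval_add, add_mul, Finset.sum_add_distrib, mul_add]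
  map_smul' c p := by
    simp only [trapU, eval_smul, smul_eq_mul, Finset.mul_sum, RingHom.id_apply]
    congr 1 with j
    ring

def chebCoeffULinear (k : ℕ) : ℂ[X] →ₗ[ℂ] ℂ where
  toFun p := chebCoeffU (fun z => p.eval z) k
  map_add' p q := by
    simp only [chebCoeffU, eval_add, add_mul, ← mul_add]
    rw [intervalIntegral.integral_add (intervalIntegrable_chebCoeffU_integrand p k)
      (intervalIntegrable_chebCoeffU_integrand q k)]
  map_smul' c p := by
    simp only [chebCoeffU, eval_smul, smul_eq_mul, mul_assoc, RingHom.id_apply,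
      intervalIntegral.integral_const_mul]
    ring

theorem trapU_eq_chebCoeffU_of_natDegree_le {ρ : ℝ} (hρ : ρ ≠ 0) {n k m : ℕ} {p : ℂ[X]}
    (hp : p.natDegree ≤ n) (hm : k + n + 3 ≤ m) :
    trapU (fun z => p.eval z) ρ k m = chebCoeffU (fun z => p.eval z) k := by
  have hspan : p ∈ Submodule.span ℂ ((fun i : ℕ => U ℂ i) '' Set.Iic n) := by
    rw [span_U_image_Iic, mem_degreeLE]
    exact degree_le_of_natDegree_le hp
  refine LinearMap.eqOn_span (f := trapULinear ρ k m) (g := chebCoeffULinear k) ?_ hspan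
  rintro _ ⟨d, hd, rfl⟩
  have hd' : d ≤ n := hd
  exact (trapU_U hρ (by omega)).trans (chebCoeffU_U d k).symm

/-- the trapezoidal rule computes the Chebyshev coefficients of the
second kind of a polynomial of degree n exactly, provided m ≥ k + n + 3; in
particular all of them for 0 ≤ k ≤ n are exact once m ≥ 2n + 3. -/
theorem trapezoidal_exact_for_polynomials_second_kind
    (ρ : ℝ) (hρ : 1 < ρ) (n : ℕ) (p : Polynomial ℂ) (hp : p.natDegree = n) :
    (∀ k m : ℕ, m ≥ k + n + 3 →
      trapU (fun z => p.eval z) ρ k m = chebCoeffU (fun z => p.eval z) k) ∧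
    (∀ m : ℕ, m ≥ 2 * n + 3 → ∀ k : ℕ, k ≤ n →
      trapU (fun z => p.eval z) ρ k m = chebCoeffU (fun z => p.eval z) k) := by
  have hρ0 : ρ ≠ 0 := (zero_lt_one.trans hρ).ne'
  refine ⟨fun k m hm => ?_, fun m hm k hk => ?_⟩ <;>
    exact trapU_eq_chebCoeffU_of_natDegree_le hρ0 hp.le (by omega)
end
end

section
/- Let 1 < R ≤ ∞ and let f be analytic in every ellipse E_ρ with 1 ≤ ρ < R (i.e., f is analytic on the open region ∪_{1≤ρ<R} D̄_ρ). Then the function M(ρ) = (1/π) ∫_0^{2π} |f(½(ρe^{iθ} + (ρe^{iθ})^{-1}))| dθ is continuously differentiable on the open interval (1, R). -/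
open Complex Real MeasureTheory Polynomial

noncomputable section

/-- The open region ∪_{1 ≤ ρ < R} D̄_ρ swept out by the Bernstein ellipses of
parameter 1 ≤ ρ < R (where R may be ∞). -/
def ellipseRegion (R : EReal) : Set ℂ :=
  {z | ∃ r θ : ℝ, 1 ≤ r ∧ (r : EReal) < R ∧ z = joukowski r θ}

/-!
Write `J = joukowski`. Away from the zeros of `f`, `ρ ↦ |f(J(ρ, θ))|` is differentiable with
derivative `Re(conj f · f' · ∂J/∂ρ) / |f|`, which is bounded by `|f'| |∂J/∂ρ|`, locally uniformly
in `ρ`. The zeros of `f` that are not interior points of its zero set are isolated, hence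
countable, and for `ρ > 1` the map `θ ↦ J(ρ, θ)` is injective modulo `2π`. So for each `ρ` and
almost every `θ`, either `f(J(ρ, θ)) ≠ 0` or `f` vanishes near `J(ρ, θ)`; in both cases
`|f(J(·, θ))|` is differentiable at `ρ` and the formula above is continuous at `ρ`.
Differentiation under the integral sign (with a Lipschitz bound) and dominated convergence
then show that `M` is `C¹`.
-/

open Filter Topology Set Metric
open scoped RealInnerProductSpace

theorem exists_closedBall_subset_forall_norm_le {E : Type*} [NormedAddCommGroup E] {s : Set ℝ}
    {F' : ℝ → ℝ → E} (a b : ℝ) (hs : IsOpen s)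
    (hF' : ContinuousOn (Function.uncurry F') (s ×ˢ univ)) {x₀ : ℝ} (hx₀ : x₀ ∈ s) :
    ∃ ε > 0, closedBall x₀ ε ⊆ s ∧ ∃ C, ∀ x ∈ closedBall x₀ ε, ∀ θ ∈ uIcc a b, ‖F' x θ‖ ≤ C := by
  obtain ⟨ε, hε, hεs⟩ := nhds_basis_closedBall.mem_iff.1 (hs.mem_nhds hx₀)
  obtain ⟨C, hC⟩ := ((isCompact_closedBall x₀ ε).prod isCompact_uIcc).exists_bound_of_continuousOn
    (hF'.mono (prod_mono hεs (subset_univ _)))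
  exact ⟨ε, hε, hεs, C, fun x hx θ hθ => hC (x, θ) ⟨hx, hθ⟩⟩

section NormDeriv

variable {E : Type*} [NormedAddCommGroup E] [InnerProductSpace ℝ E]

theorem HasDerivAt.norm {g : ℝ → E} {g' : E} {x : ℝ} (hg : HasDerivAt g g' x) (h0 : g x ≠ 0) :
    HasDerivAt (fun t => ‖g t‖) (‖g x‖⁻¹ * ⟪g x, g'⟫) x := by
  have hsq : (‖g x‖ ^ 2) ≠ 0 := by positivity
  have h := hg.norm_sq.sqrt hsq
  simp only [Real.sqrt_sq (norm_nonneg _)] at h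
  convert h using 1
  field_simp

/-- Since `‖0‖⁻¹ = 0`, the formula also gives the derivative `0` where `g` vanishes near `x`. -/
theorem hasDerivAt_norm_of_ne_zero_or_eventuallyEq_zero {g : ℝ → E} {g' : E} {x : ℝ}
    (hg : HasDerivAt g g' x) (h : g x ≠ 0 ∨ g =ᶠ[𝓝 x] 0) :
    HasDerivAt (fun t => ‖g t‖) (‖g x‖⁻¹ * ⟪g x, g'⟫) x := by
  rcases h with h0 | hzero
  · exact hg.norm h0
  · have hnorm : (fun t => ‖g t‖) =ᶠ[𝓝 x] fun _ => 0 := hzero.mono fun t ht => by simp [ht]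
    simpa [hzero.self_of_nhds] using (hasDerivAt_const x (0 : ℝ)).congr_of_eventuallyEq hnorm

theorem continuousAt_inv_norm_mul_inner_of_ne_zero_or_eventuallyEq_zero {g g' : ℝ → E} {x : ℝ}
    (hg : ContinuousAt g x) (hg' : ContinuousAt g' x) (h : g x ≠ 0 ∨ g =ᶠ[𝓝 x] 0) :
    ContinuousAt (fun t => ‖g t‖⁻¹ * ⟪g t, g' t⟫) x := by
  rcases h with h0 | hzero
  · exact (hg.norm.inv₀ (norm_ne_zero_iff.2 h0)).mul (hg.inner hg')
  · have hz : (fun t => ‖g t‖⁻¹ * ⟪g t, g' t⟫) =ᶠ[𝓝 x] fun _ => 0 :=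
      hzero.mono fun t ht => by simp [ht]
    exact continuousAt_const.congr hz.symm

theorem norm_inv_norm_mul_inner_le (u v : E) : ‖‖u‖⁻¹ * ⟪u, v⟫‖ ≤ ‖v‖ := by
  rcases eq_or_ne u 0 with rfl | hu
  · simp
  rw [norm_mul, norm_inv, norm_norm, inv_mul_le_iff₀ (norm_pos_iff.2 hu)]
  exact norm_inner_le_norm u v

theorem Continuous.aestronglyMeasurable_inv_norm_mul_inner {g g' : ℝ → E} (hg : Continuous g)
    (hg' : Continuous g') {ν : Measure ℝ} :
    AEStronglyMeasurable (fun θ => ‖g θ‖⁻¹ * ⟪g θ, g' θ⟫) ν :=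
  (hg.norm.measurable.inv.mul (hg.inner hg').measurable).aestronglyMeasurable

variable {μ : Measure ℝ} [IsLocallyFiniteMeasure μ] {a b : ℝ} {s : Set ℝ} {F F' : ℝ → ℝ → E}

theorem hasDerivAt_intervalIntegral_norm (hs : IsOpen s)
    (hF : ∀ x ∈ s, ∀ θ, HasDerivAt (F · θ) (F' x θ) x) (hFc : ∀ x ∈ s, Continuous (F x))
    (hF'c : ContinuousOn (Function.uncurry F') (s ×ˢ univ)) {x₀ : ℝ} (hx₀ : x₀ ∈ s)
    (hgood : ∀ᵐ θ ∂μ, F x₀ θ ≠ 0 ∨ (F · θ) =ᶠ[𝓝 x₀] 0) :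
    HasDerivAt (fun x => ∫ θ in a..b, ‖F x θ‖ ∂μ)
      (∫ θ in a..b, ‖F x₀ θ‖⁻¹ * ⟪F x₀ θ, F' x₀ θ⟫ ∂μ) x₀ := by
  obtain ⟨ε, hε, hεs, C, hC⟩ := exists_closedBall_subset_forall_norm_le a b hs hF'c hx₀
  have hF'x₀ : Continuous (F' x₀) :=
    hF'c.comp_continuous (.prodMk_right x₀) fun _ => ⟨hx₀, trivial⟩
  refine (intervalIntegral.hasDerivAt_integral_of_dominated_loc_of_lip (bound := fun _ => C)
    (ball_mem_nhds x₀ hε) ?_ ((hFc x₀ hx₀).norm.intervalIntegrable _ _)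
    ((hFc x₀ hx₀).aestronglyMeasurable_inv_norm_mul_inner hF'x₀) ?_ intervalIntegrable_const
    (hgood.mono fun θ hθ _ => hasDerivAt_norm_of_ne_zero_or_eventuallyEq_zero
      (hF x₀ hx₀ θ) hθ)).2
  · filter_upwards [hs.mem_nhds hx₀] with x hx
    exact (hFc x hx).norm.aestronglyMeasurable
  · refine ae_of_all _ fun θ hθ => ?_
    have hlip : LipschitzOnWith (Real.nnabs C) (F · θ) (ball x₀ ε) :=
      (convex_ball x₀ ε).lipschitzOnWith_of_nnnorm_hasDerivWithin_le
        (fun x hx => (hF x (hεs (ball_subset_closedBall hx)) θ).hasDerivWithinAt)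
        fun x hx => by
          rw [← NNReal.coe_le_coe, coe_nnnorm, Real.coe_nnabs]
          exact (hC x (ball_subset_closedBall hx) θ (uIoc_subset_uIcc hθ)).trans (le_abs_self C)
    simpa [Function.comp_def] using lipschitzWith_one_norm.comp_lipschitzOnWith hlip

theorem continuousOn_intervalIntegral_inv_norm_mul_inner (hs : IsOpen s)
    (hF : ∀ x ∈ s, ∀ θ, HasDerivAt (F · θ) (F' x θ) x) (hFc : ∀ x ∈ s, Continuous (F x))
    (hF'c : ContinuousOn (Function.uncurry F') (s ×ˢ univ))
    (hgood : ∀ x ∈ s, ∀ᵐ θ ∂μ, F x θ ≠ 0 ∨ (F · θ) =ᶠ[𝓝 x] 0) :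
    ContinuousOn (fun x => ∫ θ in a..b, ‖F x θ‖⁻¹ * ⟪F x θ, F' x θ⟫ ∂μ) s := by
  intro x₀ hx₀
  obtain ⟨ε, hε, hεs, C, hC⟩ := exists_closedBall_subset_forall_norm_le a b hs hF'c hx₀
  have hF'x (x : ℝ) (hx : x ∈ s) : Continuous (F' x) :=
    hF'c.comp_continuous (.prodMk_right x) fun _ => ⟨hx, trivial⟩
  refine (intervalIntegral.continuousAt_of_dominated_interval (bound := fun _ => C) ?_ ?_
    intervalIntegrable_const ((hgood x₀ hx₀).mono fun θ hθ _ => ?_)).continuousWithinAt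
  · filter_upwards [hs.mem_nhds hx₀] with x hx
    exact (hFc x hx).aestronglyMeasurable_inv_norm_mul_inner (hF'x x hx)
  · filter_upwards [closedBall_mem_nhds x₀ hε] with x hx
    exact ae_of_all _ fun θ hθ =>
      (norm_inv_norm_mul_inner_le _ _).trans (hC x hx θ (uIoc_subset_uIcc hθ))
  · have hF'θ : ContinuousAt (F' · θ) x₀ :=
      (hF'c.continuousAt ((hs.prod isOpen_univ).mem_nhds ⟨hx₀, trivial⟩)).comp
        (Continuous.prodMk_left θ).continuousAt
    exact continuousAt_inv_norm_mul_inner_of_ne_zero_or_eventuallyEq_zero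
      (hF x₀ hx₀ θ).continuousAt hF'θ hθ

theorem contDiffOn_intervalIntegral_norm (hs : IsOpen s)
    (hF : ∀ x ∈ s, ∀ θ, HasDerivAt (F · θ) (F' x θ) x) (hFc : ∀ x ∈ s, Continuous (F x))
    (hF'c : ContinuousOn (Function.uncurry F') (s ×ˢ univ))
    (hgood : ∀ x ∈ s, ∀ᵐ θ ∂μ, F x θ ≠ 0 ∨ (F · θ) =ᶠ[𝓝 x] 0) :
    ContDiffOn ℝ 1 (fun x => ∫ θ in a..b, ‖F x θ‖ ∂μ) s := by
  have hderiv (x : ℝ) (hx : x ∈ s) := hasDerivAt_intervalIntegral_norm (a := a) (b := b)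
    hs hF hFc hF'c hx (hgood x hx)
  refine (contDiffOn_succ_iff_deriv_of_isOpen (n := 0) hs).2
    ⟨fun x hx => (hderiv x hx).differentiableAt.differentiableWithinAt, by simp, ?_⟩
  exact contDiffOn_zero.2 <| (continuousOn_intervalIntegral_inv_norm_mul_inner hs hF hFc hF'c
    hgood).congr fun x hx => (hderiv x hx).deriv

end NormDeriv

def joukowskiDeriv (r θ : ℝ) : ℂ :=
  (exp (θ * I) - ((r : ℂ) ^ 2 * exp (θ * I))⁻¹) / 2

theorem hasDerivAt_joukowski {r : ℝ} (hr : r ≠ 0) (θ : ℝ) :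
    HasDerivAt (joukowski · θ) (joukowskiDeriv r θ) r := by
  have hu : HasDerivAt (fun z : ℂ => z * exp (θ * I)) (exp (θ * I)) r := hasDerivAt_mul_const _
  have hne : (r : ℂ) * exp (θ * I) ≠ 0 := mul_ne_zero (ofReal_ne_zero.2 hr) (exp_ne_zero _)
  convert ((hu.add (hu.inv hne)).div_const 2).comp_ofReal using 1
  · rfl
  · simp only [joukowskiDeriv]
    field_simp
    ring

theorem continuousOn_joukowski :
    ContinuousOn (fun q : ℝ × ℝ => joukowski q.1 q.2) {q | q.1 ≠ 0} := by
  intro q hq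
  have : (q.1 : ℂ) * exp (q.2 * I) ≠ 0 := mul_ne_zero (ofReal_ne_zero.2 hq) (exp_ne_zero _)
  unfold joukowski
  fun_prop (disch := assumption)

theorem continuousOn_joukowskiDeriv :
    ContinuousOn (fun q : ℝ × ℝ => joukowskiDeriv q.1 q.2) {q | q.1 ≠ 0} := by
  intro q hq
  have : (q.1 : ℂ) ^ 2 * exp (q.2 * I) ≠ 0 :=
    mul_ne_zero (pow_ne_zero _ (ofReal_ne_zero.2 hq)) (exp_ne_zero _)
  unfold joukowskiDeriv
  fun_prop (disch := assumption)

theorem exp_mul_I_eq_of_joukowski_eq {r θ θ' : ℝ} (hr : 1 < r)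
    (h : joukowski r θ = joukowski r θ') : exp (θ * I) = exp (θ' * I) := by
  set u := (r : ℂ) * exp (θ * I)
  set v := (r : ℂ) * exp (θ' * I)
  have hnorm (φ : ℝ) : ‖(r : ℂ) * exp (φ * I)‖ = r := by
    rw [norm_mul, norm_exp_ofReal_mul_I, mul_one, norm_real, Real.norm_of_nonneg (by linarith)]
  have hu : u ≠ 0 := norm_ne_zero_iff.1 ((hnorm θ).trans_ne (by positivity))
  have hv : v ≠ 0 := norm_ne_zero_iff.1 ((hnorm θ').trans_ne (by positivity))
  have huv : u * v ≠ 1 := fun h1 => by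
    have := congrArg norm h1
    rw [norm_mul, hnorm, hnorm, norm_one] at this
    nlinarith
  have hfac : (u - v) * (u * v - 1) = 0 := by
    have h2 : u + u⁻¹ = v + v⁻¹ := by simpa [joukowski, u, v] using h
    field_simp at h2
    linear_combination h2
  have : u = v := sub_eq_zero.1 ((mul_eq_zero.1 hfac).resolve_right (sub_ne_zero.2 huv))
  exact mul_left_cancel₀ (ofReal_ne_zero.2 (by linarith)) this

theorem countable_setOf_exp_mul_I_eq (θ₀ : ℝ) :
    {θ : ℝ | exp (θ * I) = exp (θ₀ * I)}.Countable := by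
  refine (countable_range fun n : ℤ => θ₀ + n * (2 * π)).mono fun θ hθ => ?_
  obtain ⟨n, hn⟩ := exp_eq_exp_iff_exists_int.1 hθ
  have : (θ : ℂ) = θ₀ + n * (2 * π) := mul_right_cancel₀ I_ne_zero (by rw [hn]; ring)
  exact ⟨n, by exact_mod_cast this.symm⟩

theorem countable_setOf_joukowski_eq {r : ℝ} (hr : 1 < r) (z : ℂ) :
    {θ | joukowski r θ = z}.Countable := by
  rcases eq_empty_or_nonempty {θ | joukowski r θ = z} with h | ⟨θ₀, hθ₀⟩
  · simp [h]
  exact (countable_setOf_exp_mul_I_eq θ₀).mono fun θ hθ =>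
    exp_mul_I_eq_of_joukowski_eq hr (hθ.trans hθ₀.symm)

theorem Set.Countable.preimage_joukowski {B : Set ℂ} (hB : B.Countable) {r : ℝ} (hr : 1 < r) :
    {θ | joukowski r θ ∈ B}.Countable := by
  refine (hB.biUnion fun z _ => countable_setOf_joukowski_eq hr z).mono fun θ hθ => ?_
  exact mem_iUnion₂.2 ⟨_, hθ, rfl⟩

theorem countable_setOf_isolated_zero {X E : Type*} [TopologicalSpace X]
    [SecondCountableTopology X] [Zero E] (f : X → E) :
    {z | f z = 0 ∧ ∀ᶠ w in 𝓝[≠] z, f w ≠ 0}.Countable := by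
  refine (HereditarilyLindelofSpace.isLindelof _).countable (discreteTopology_subtype_iff.2 ?_)
  rintro z ⟨-, hz⟩
  exact inf_principal_eq_bot.2 (hz.mono fun w hw hmem => hw hmem.1)

theorem ae_joukowski_ne_zero_or_eventuallyEq_zero {f : ℂ → ℂ} {r : ℝ} (hr : 1 < r)
    (hf : ∀ θ, AnalyticAt ℂ f (joukowski r θ)) :
    ∀ᵐ θ, f (joukowski r θ) ≠ 0 ∨ (fun x => f (joukowski x θ)) =ᶠ[𝓝 r] 0 := by
  refine ((countable_setOf_isolated_zero f).preimage_joukowski hr).ae_notMem _ |>.mono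
    fun θ hθ => ?_
  rcases (hf θ).eventually_eq_zero_or_eventually_ne_zero with hzero | hne
  · exact .inr ((hasDerivAt_joukowski (by positivity) θ).continuousAt.eventually hzero)
  · exact .inl fun h0 => hθ ⟨h0, hne⟩

theorem hasDerivAt_comp_joukowski {f : ℂ → ℂ} {r θ : ℝ} (hr : r ≠ 0)
    (hf : DifferentiableAt ℂ f (joukowski r θ)) :
    HasDerivAt (fun x => f (joukowski x θ)) (deriv f (joukowski r θ) * joukowskiDeriv r θ) r :=
  hf.hasDerivAt.comp r (hasDerivAt_joukowski hr θ)

theorem Mfun_contDiff_general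
    (R : EReal) (f : ℂ → ℂ)
    (hf : ∀ z ∈ ellipseRegion R, AnalyticAt ℂ f z) :
    ContDiffOn ℝ 1 (Mfun f) {ρ : ℝ | 1 < ρ ∧ (ρ : EReal) < R} := by
  set S := {ρ : ℝ | 1 < ρ ∧ (ρ : EReal) < R}
  have hS : IsOpen S := isOpen_Ioi.inter (isOpen_Iio.preimage continuous_coe_real_ereal)
  have hS_ne : S ×ˢ univ ⊆ {q : ℝ × ℝ | q.1 ≠ 0} := fun q hq => (one_pos.trans hq.1.1).ne'
  have hSR (x : ℝ) (hx : x ∈ S) (θ : ℝ) : joukowski x θ ∈ ellipseRegion R :=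
    ⟨x, θ, hx.1.le, hx.2, rfl⟩
  have hfJ : ContinuousOn (fun q : ℝ × ℝ => f (joukowski q.1 q.2)) (S ×ˢ univ) :=
    (AnalyticOnNhd.continuousOn hf).comp (continuousOn_joukowski.mono hS_ne)
      fun q hq => hSR q.1 hq.1 q.2
  have hf'J : ContinuousOn (fun q : ℝ × ℝ => deriv f (joukowski q.1 q.2)) (S ×ˢ univ) :=
    (AnalyticOnNhd.deriv hf).continuousOn.comp (continuousOn_joukowski.mono hS_ne)
      fun q hq => hSR q.1 hq.1 q.2
  have hint : ContDiffOn ℝ 1 (fun x => ∫ θ in (0 : ℝ)..(2 * π), ‖f (joukowski x θ)‖) S :=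
    contDiffOn_intervalIntegral_norm hS
      (fun x hx θ => hasDerivAt_comp_joukowski (one_pos.trans hx.1).ne'
        (hf _ (hSR x hx θ)).differentiableAt)
      (fun x hx => hfJ.comp_continuous (.prodMk_right x) fun _ => ⟨hx, trivial⟩)
      (hf'J.mul (continuousOn_joukowskiDeriv.mono hS_ne))
      fun x hx => ae_joukowski_ne_zero_or_eventuallyEq_zero hx.1 fun θ => hf _ (hSR x hx θ)
  exact contDiffOn_const.mul hint

/-- M(ρ) is continuously differentiable on (1, R). -/
theorem Mfun_contDiff
    (R : EReal) (hR : 1 < R) (f : ℂ → ℂ)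
    (hf : ∀ z ∈ ellipseRegion R, AnalyticAt ℂ f z) :
    ContDiffOn ℝ 1 (Mfun f) {ρ : ℝ | 1 < ρ ∧ (ρ : EReal) < R} :=
  Mfun_contDiff_general R f hf
end
end

section
/- Let 1 < R ≤ ∞ and let f be analytic in every ellipse E_ρ with 1 ≤ ρ < R (i.e., f is analytic on the open region ∪_{1≤ρ<R} D̄_ρ). Then the function M(ρ) = (1/π) ∫_0^{2π} |f(½(ρe^{iθ} + (ρe^{iθ})^{-1}))| dθ is monotonically nondecreasing on [1, R): for all 1 ≤ ρ ≤ r < R, M(ρ) ≤ M(r). -/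
open Complex Real MeasureTheory Polynomial

noncomputable section

/-!
With `J w = (w + w⁻¹) / 2` and `g = f ∘ J`, which is holomorphic on the closed annulus
`r⁻¹ ≤ |w| ≤ r`, we have `π M(ρ) = ∫ |g(ρ e^{iθ})| dθ`. Choose a unimodular weight `u` with
`g(ρ e^{iθ}) u(θ) = |g(ρ e^{iθ})|`. Then `Φ(ζ) = ∫ g(ζ e^{iθ}) u(θ) dθ` is holomorphic in `ζ`, and
by the maximum modulus principle on the annulus, `π M(ρ) = Φ(ρ)` is at most the largest of the
boundary values `|Φ(ζ)| ≤ ∫ |g(ζ e^{iθ})| dθ` with `|ζ| = r` or `|ζ| = r⁻¹`. Since `J(1/w) = J(w)`,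
both boundary circles are mapped onto the ellipse `E_r`, so both bounds equal `π M(r)`.
-/

open Metric Set

def joukowskiMap (w : ℂ) : ℂ := (w + w⁻¹) / 2

lemma joukowski_eq_joukowskiMap_circleMap (r θ : ℝ) :
    joukowski r θ = joukowskiMap (circleMap 0 r θ) := by
  rw [circleMap_zero]; rfl

lemma joukowskiMap_inv (w : ℂ) : joukowskiMap w⁻¹ = joukowskiMap w := by
  rw [joukowskiMap, joukowskiMap, inv_inv, add_comm]

lemma analyticAt_joukowskiMap {w : ℂ} (hw : w ≠ 0) : AnalyticAt ℂ joukowskiMap w := by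
  unfold joukowskiMap; fun_prop (disch := assumption)

lemma joukowskiMap_mem_ellipseRegion {R : EReal} {w : ℂ} (hw : w ≠ 0)
    (h₁ : ((‖w‖ : ℝ) : EReal) < R) (h₂ : ((‖w‖⁻¹ : ℝ) : EReal) < R) :
    joukowskiMap w ∈ ellipseRegion R := by
  have hpolar : circleMap 0 ‖w‖ (arg w) = w := by rw [circleMap_zero, norm_mul_exp_arg_mul_I]
  rcases le_total 1 ‖w‖ with h | h
  · exact ⟨‖w‖, arg w, h, h₁, by rw [joukowski_eq_joukowskiMap_circleMap, hpolar]⟩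
  · refine ⟨‖w‖⁻¹, -arg w, (one_le_inv₀ (norm_pos_iff.2 hw)).2 h, h₂, ?_⟩
    rw [joukowski_eq_joukowskiMap_circleMap, ← circleMap_zero_inv, hpolar, joukowskiMap_inv]

section CircleIntegrals

variable {E : Type*} [NormedAddCommGroup E] [NormedSpace ℝ E]

lemma Function.Periodic.intervalIntegral_comp_neg {G : ℝ → E} {T : ℝ}
    (hG : Function.Periodic G T) : ∫ θ in (0)..T, G (-θ) = ∫ θ in (0)..T, G θ := by
  simpa [intervalIntegral.integral_comp_neg] using hG.intervalIntegral_add_eq (-T) 0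

lemma intervalIntegral_comp_mul_exp (F : ℂ → E) (ζ : ℂ) :
    ∫ θ in (0)..(2 * π), F (ζ * exp (θ * I)) =
      ∫ θ in (0)..(2 * π), F (circleMap 0 ‖ζ‖ θ) := by
  have hrot : ∀ θ : ℝ, ζ * exp (θ * I) = circleMap 0 ‖ζ‖ (θ + arg ζ) := by
    intro θ
    rw [circleMap_zero, ofReal_add, add_mul, Complex.exp_add]
    conv_lhs => rw [← norm_mul_exp_arg_mul_I ζ]
    ring
  simp_rw [hrot]
  rw [intervalIntegral.integral_comp_add_right (fun θ => F (circleMap 0 ‖ζ‖ θ))]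
  simpa [add_comm] using
    ((periodic_circleMap 0 ‖ζ‖).comp F).intervalIntegral_add_eq (arg ζ) 0

lemma intervalIntegral_comp_joukowskiMap_circleMap_inv (F : ℂ → E) (t : ℝ) :
    ∫ θ in (0)..(2 * π), F (joukowskiMap (circleMap 0 t⁻¹ θ)) =
      ∫ θ in (0)..(2 * π), F (joukowskiMap (circleMap 0 t θ)) := by
  have hinv : ∀ θ : ℝ, circleMap 0 t⁻¹ θ = (circleMap 0 t (-θ))⁻¹ := by
    simp [circleMap_zero_inv]
  simp_rw [hinv, joukowskiMap_inv]
  exact ((periodic_circleMap 0 t).comp (F ∘ joukowskiMap)).intervalIntegral_comp_neg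

end CircleIntegrals

lemma continuous_comp_mul_exp {E : Type*} [TopologicalSpace E] {g : ℂ → E} {ζ : ℂ}
    (hg : ∀ θ : ℝ, ContinuousAt g (ζ * exp (θ * I))) :
    Continuous fun θ : ℝ => g (ζ * exp (θ * I)) :=
  continuous_iff_continuousAt.2 fun θ =>
    (hg θ).comp (f := fun θ : ℝ => ζ * exp (θ * I)) (by fun_prop)

theorem differentiableAt_intervalIntegral_comp_mul_exp_mul {g : ℂ → ℂ} {u : ℝ → ℂ} {C a b : ℝ}
    (hu : AEStronglyMeasurable u) (hC : ∀ θ, ‖u θ‖ ≤ C) {ζ₀ : ℂ}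
    (hg : ∀ w ∈ sphere (0 : ℂ) ‖ζ₀‖, AnalyticAt ℂ g w) :
    DifferentiableAt ℂ (fun ζ => ∫ θ in a..b, g (ζ * exp (θ * I)) * u θ) ζ₀ := by
  -- `g` is analytic on a compact neighbourhood `L` of the circle; the bound on `deriv g` over `L`
  -- dominates the `ζ`-derivatives of the integrand for `ζ` near `ζ₀`.
  obtain ⟨δ, hδ, hδU⟩ := (isCompact_sphere (0 : ℂ) ‖ζ₀‖).exists_cthickening_subset_open
    (isOpen_analyticAt ℂ g) hg
  set L := cthickening δ (sphere (0 : ℂ) ‖ζ₀‖)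
  have hgL : AnalyticOnNhd ℂ g L := fun w hw => hδU hw
  obtain ⟨B, hB⟩ := (isCompact_sphere (0 : ℂ) ‖ζ₀‖).cthickening.exists_bound_of_continuousOn
    hgL.deriv.continuousOn
  have hmem : ∀ ζ ∈ ball ζ₀ δ, ∀ θ : ℝ, ζ * exp (θ * I) ∈ L := by
    intro ζ hζ θ
    refine mem_cthickening_of_dist_le _ (ζ₀ * exp (θ * I)) _ _ (by simp) ?_
    rw [dist_eq_norm, ← sub_mul, norm_mul, norm_exp_ofReal_mul_I, mul_one, ← dist_eq_norm]
    exact (mem_ball.1 hζ).le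
  have hmeas : ∀ ζ ∈ ball ζ₀ δ,
      AEStronglyMeasurable (fun θ : ℝ => g (ζ * exp (θ * I)) * u θ) := fun ζ hζ =>
    (continuous_comp_mul_exp fun θ => (hgL _ (hmem ζ hζ θ)).continuousAt).aestronglyMeasurable.mul hu
  have hderiv_meas : AEStronglyMeasurable
      (fun θ : ℝ => deriv g (ζ₀ * exp (θ * I)) * exp (θ * I) * u θ) :=
    ((continuous_comp_mul_exp fun θ =>
      (hgL.deriv _ (hmem ζ₀ (mem_ball_self hδ) θ)).continuousAt).mul
        (by fun_prop)).aestronglyMeasurable.mul hu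
  have hint : IntervalIntegrable (fun θ : ℝ => g (ζ₀ * exp (θ * I)) * u θ) volume a b := by
    refine intervalIntegrable_iff.2 (Integrable.mul_bdd ?_ hu.restrict (ae_of_all _ hC))
    exact intervalIntegrable_iff.1 ((continuous_comp_mul_exp fun θ =>
      (hgL _ (hmem ζ₀ (mem_ball_self hδ) θ)).continuousAt).intervalIntegrable a b)
  have hbound : ∀ θ : ℝ, ∀ ζ ∈ ball ζ₀ δ,
      ‖deriv g (ζ * exp (θ * I)) * exp (θ * I) * u θ‖ ≤ B * C := by
    intro θ ζ hζ
    rw [norm_mul, norm_mul, norm_exp_ofReal_mul_I, mul_one]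
    exact mul_le_mul (hB _ (hmem ζ hζ θ)) (hC θ) (norm_nonneg _)
      ((norm_nonneg _).trans (hB _ (hmem ζ hζ θ)))
  have hderiv : ∀ θ : ℝ, ∀ ζ ∈ ball ζ₀ δ, HasDerivAt (fun ζ => g (ζ * exp (θ * I)) * u θ)
      (deriv g (ζ * exp (θ * I)) * exp (θ * I) * u θ) ζ := fun θ ζ hζ =>
    ((hgL _ (hmem ζ hζ θ)).differentiableAt.hasDerivAt.comp ζ
      (hasDerivAt_mul_const _)).mul_const _
  exact (intervalIntegral.hasDerivAt_integral_of_dominated_loc_of_deriv_le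
    (ball_mem_nhds ζ₀ hδ) (Filter.eventually_of_mem (ball_mem_nhds ζ₀ hδ)
      fun ζ hζ => (hmeas ζ hζ).restrict) hint hderiv_meas.restrict
    (ae_of_all _ fun θ _ => hbound θ) intervalIntegrable_const
    (ae_of_all _ fun θ _ => hderiv θ)).2.differentiableAt

lemma mul_exp_neg_arg_mul_I (z : ℂ) : z * exp (↑(-arg z) * I) = ‖z‖ := by
  conv_lhs => rw [← norm_mul_exp_arg_mul_I z]
  rw [mul_assoc, ← Complex.exp_add]
  simp

lemma norm_intervalIntegral_comp_mul_exp_mul_le {g : ℂ → ℂ} {u : ℝ → ℂ} {z : ℂ}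
    (hg : Continuous fun θ : ℝ => g (z * exp (θ * I))) (hu : ∀ θ, ‖u θ‖ ≤ 1) :
    ‖∫ θ in (0)..(2 * π), g (z * exp (θ * I)) * u θ‖ ≤
      ∫ θ in (0)..(2 * π), ‖g (circleMap 0 ‖z‖ θ)‖ := by
  rw [← intervalIntegral_comp_mul_exp (fun w => ‖g w‖) z]
  refine intervalIntegral.norm_integral_le_of_norm_le (by positivity)
    (ae_of_all _ fun θ _ => ?_) (hg.norm.intervalIntegrable _ _)
  rw [norm_mul]
  exact mul_le_of_le_one_right (norm_nonneg _) (hu θ)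

theorem intervalIntegral_norm_comp_mul_exp_le_max {g : ℂ → ℂ} {s t : ℝ}
    (hg : ∀ w : ℂ, s ≤ ‖w‖ → ‖w‖ ≤ t → AnalyticAt ℂ g w) {ζ : ℂ}
    (hs : s < ‖ζ‖) (ht : ‖ζ‖ < t) :
    ∫ θ in (0)..(2 * π), ‖g (ζ * exp (θ * I))‖ ≤
      max (∫ θ in (0)..(2 * π), ‖g (circleMap 0 s θ)‖)
        (∫ θ in (0)..(2 * π), ‖g (circleMap 0 t θ)‖) := by
  have hcont : ∀ z : ℂ, s ≤ ‖z‖ → ‖z‖ ≤ t → Continuous fun θ : ℝ => g (z * exp (θ * I)) :=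
    fun z hs ht => continuous_comp_mul_exp fun θ =>
      (hg _ (by simpa using hs) (by simpa using ht)).continuousAt
  -- `u` rotates the integrand at `ζ` onto its modulus, so that `Φ ζ` is the left-hand side
  set u : ℝ → ℂ := fun θ => exp (↑(-arg (g (ζ * exp (θ * I)))) * I)
  set Φ : ℂ → ℂ := fun z => ∫ θ in (0)..(2 * π), g (z * exp (θ * I)) * u θ
  set U : Set ℂ := (‖·‖) ⁻¹' Ioo s t
  have hu_norm : ∀ θ, ‖u θ‖ ≤ 1 := fun θ => (norm_exp_ofReal_mul_I _).le
  have hu_meas : AEStronglyMeasurable u := by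
    have := Complex.measurable_arg.comp (hcont ζ hs.le ht.le).measurable
    fun_prop
  have hΦ : DiffContOnCl ℂ Φ U := by
    refine DifferentiableOn.diffContOnCl fun z hz =>
      (differentiableAt_intervalIntegral_comp_mul_exp_mul hu_meas hu_norm ?_).differentiableWithinAt
    have hz' : z ∈ (‖·‖) ⁻¹' Icc s t :=
      closure_minimal (preimage_mono Ioo_subset_Icc_self)
        (isClosed_Icc.preimage continuous_norm) hz
    intro w hw
    rw [mem_sphere_zero_iff_norm] at hw
    exact hg w (hw ▸ hz'.1) (hw ▸ hz'.2)
  have hfrontier : ∀ z ∈ frontier U, ‖Φ z‖ ≤ max (∫ θ in (0)..(2 * π), ‖g (circleMap 0 s θ)‖)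
      (∫ θ in (0)..(2 * π), ‖g (circleMap 0 t θ)‖) := by
    intro z hz
    have hz' : ‖z‖ = s ∨ ‖z‖ = t := by
      simpa [frontier_Ioo (hs.trans ht)] using continuous_norm.frontier_preimage_subset _ hz
    have hzs : s ≤ ‖z‖ := by rcases hz' with h | h <;> linarith
    have hzt : ‖z‖ ≤ t := by rcases hz' with h | h <;> linarith
    refine (norm_intervalIntegral_comp_mul_exp_mul_le (hcont z hzs hzt) hu_norm).trans ?_
    rcases hz' with h | h <;> rw [h] <;> simp
  have hΦζ : Φ ζ = ↑(∫ θ in (0)..(2 * π), ‖g (ζ * exp (θ * I))‖) := by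
    rw [← intervalIntegral.integral_ofReal]
    exact intervalIntegral.integral_congr fun θ _ => mul_exp_neg_arg_mul_I _
  have hmax := Complex.norm_le_of_forall_mem_frontier_norm_le
    ((isBounded_closedBall (x := (0 : ℂ)) (r := t)).subset fun z hz => by
      simpa using hz.2.le) hΦ hfrontier (subset_closure ⟨hs, ht⟩)
  rwa [hΦζ, norm_real, Real.norm_of_nonneg
    (intervalIntegral.integral_nonneg (by positivity) fun θ _ => norm_nonneg _)] at hmax

theorem Mfun_monotone_general
    (R : EReal) (f : ℂ → ℂ)
    (hf : ∀ z ∈ ellipseRegion R, AnalyticAt ℂ f z) :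
    ∀ ρ r : ℝ, 1 ≤ ρ → ρ ≤ r → (r : EReal) < R → Mfun f ρ ≤ Mfun f r := by
  intro ρ r hρ hρr hrR
  rcases hρr.eq_or_lt with rfl | hlt
  · rfl
  have hr : 0 < r := by linarith
  have hρ_norm : ‖(ρ : ℂ)‖ = ρ := by rw [norm_real, Real.norm_of_nonneg (by linarith)]
  have hfJ : ∀ w : ℂ, r⁻¹ ≤ ‖w‖ → ‖w‖ ≤ r → AnalyticAt ℂ (f ∘ joukowskiMap) w := by
    intro w hw₁ hw₂
    have hw : w ≠ 0 := norm_pos_iff.1 ((inv_pos.2 hr).trans_le hw₁)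
    refine (hf _ (joukowskiMap_mem_ellipseRegion hw ?_ ?_)).comp (analyticAt_joukowskiMap hw)
    · exact (EReal.coe_le_coe_iff.2 hw₂).trans_lt hrR
    · exact (EReal.coe_le_coe_iff.2 (inv_le_of_inv_le₀ hr hw₁)).trans_lt hrR
  have key := intervalIntegral_norm_comp_mul_exp_le_max hfJ (ζ := ρ)
    (by rw [hρ_norm]; exact (inv_lt_one_of_one_lt₀ (hρ.trans_lt hlt)).trans_le hρ)
    (by rwa [hρ_norm])
  simp only [Function.comp_apply] at key
  rw [intervalIntegral_comp_mul_exp (fun w => ‖f (joukowskiMap w)‖), hρ_norm,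
    intervalIntegral_comp_joukowskiMap_circleMap_inv (fun w => ‖f w‖), max_self] at key
  unfold Mfun
  simp_rw [joukowski_eq_joukowskiMap_circleMap]
  gcongr

/-- M(ρ) is monotonically nondecreasing on [1, R). -/
theorem Mfun_monotone
    (R : EReal) (hR : 1 < R) (f : ℂ → ℂ)
    (hf : ∀ z ∈ ellipseRegion R, AnalyticAt ℂ f z) :
    ∀ ρ r : ℝ, 1 ≤ ρ → ρ ≤ r → (r : EReal) < R → Mfun f ρ ≤ Mfun f r :=
  Mfun_monotone_general R f hf
end
end

section
/- Let 1 < R ≤ ∞, let f be analytic in every ellipse E_ρ with 1 ≤ ρ < R (i.e., f is analytic on the open region ∪_{1≤ρ<R} D̄_ρ), and suppose f is not identically zero. Then log M(ρ) is a convex function of log ρ; that is, the function s ↦ log M(e^s) is convex on the interval [0, log R). -/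
/-! Under `w ↦ cosh w` the vertical line `Re w = s` winds `2π`-periodically around the ellipse
`E_{e^s}`, so `M(e^s) = π⁻¹ ∫₀^{2π} |h(s + it)| dt` with `h = f ∘ cosh`. Fix `s` and a phase `ψ`,
`|ψ| ≤ 1`, with `h(s + it) ψ(t) = |h(s + it)|`. Then `Φ(w) = ∫₀^{2π} h(w + it) ψ(t) dt` is
holomorphic, `|Φ(w)|` is at most the integral of `|h|` over the line through `w` (by periodicity),
and `Φ(s)` equals it; Hadamard's three lines theorem therefore makes that line integral log-convex
in `Re w`. The identity theorem keeps `M` positive, so that its logarithm is meaningful. -/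

open Complex Real MeasureTheory Polynomial

noncomputable section

open Set Filter Topology Interval ComplexConjugate Complex.HadamardThreeLines

theorem differentiableAt_intervalIntegral_comp_add_mul {h : ℂ → ℂ} {U : Set ℂ} (hU : IsOpen U)
    (hh : DifferentiableOn ℂ h U) {γ : ℝ → ℂ} (hγ : Continuous γ) {ψ : ℝ → ℂ} {a b : ℝ}
    (hψ : IntervalIntegrable ψ volume a b) {w₀ : ℂ} (hw₀ : ∀ t ∈ [[a, b]], w₀ + γ t ∈ U) :
    DifferentiableAt ℂ (fun w => ∫ t in a..b, h (w + γ t) * ψ t) w₀ := by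
  set K := (fun t => w₀ + γ t) '' [[a, b]]
  have hK : IsCompact K := isCompact_uIcc.image (by fun_prop)
  obtain ⟨δ, hδ, hδU⟩ := hK.exists_cthickening_subset_open hU (image_subset_iff.2 hw₀)
  have hmem : ∀ w ∈ Metric.ball w₀ δ, ∀ t ∈ [[a, b]], w + γ t ∈ Metric.cthickening δ K :=
    fun w hw t ht => Metric.mem_cthickening_of_dist_le _ _ δ K (mem_image_of_mem _ ht)
      (by simpa [dist_add_right] using (Metric.mem_ball.1 hw).le)
  have hderiv : ContinuousOn (deriv h) U := (hh.analyticOnNhd hU).deriv.continuousOn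
  obtain ⟨C, hC⟩ := hK.cthickening.exists_bound_of_continuousOn (hderiv.mono hδU)
  have hcomp : ∀ {g : ℂ → ℂ}, ContinuousOn g U → ∀ w ∈ Metric.ball w₀ δ,
      ContinuousOn (fun t => g (w + γ t)) [[a, b]] :=
    fun hg w hw => hg.comp (by fun_prop) fun t ht => hδU (hmem w hw t ht)
  have hmeas : ∀ {g : ℝ → ℂ}, ContinuousOn g [[a, b]] →
      AEStronglyMeasurable (fun t => g t * ψ t) (volume.restrict (Ι a b)) := fun hg =>
    ((hg.mono uIoc_subset_uIcc).aestronglyMeasurable measurableSet_uIoc).mul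
      hψ.def'.aestronglyMeasurable
  have hw₀δ : w₀ ∈ Metric.ball w₀ δ := Metric.mem_ball_self hδ
  refine (intervalIntegral.hasDerivAt_integral_of_dominated_loc_of_deriv_le
    (F' := fun w t => deriv h (w + γ t) * ψ t) (bound := fun t => C * ‖ψ t‖)
    (Metric.ball_mem_nhds w₀ hδ) ?_ (hψ.continuousOn_mul (hcomp hh.continuousOn w₀ hw₀δ))
    (hmeas (hcomp hderiv w₀ hw₀δ)) ?_ (hψ.norm.const_mul C) ?_).2.differentiableAt
  · exact eventually_of_mem (Metric.ball_mem_nhds w₀ hδ) fun w hw =>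
      hmeas (hcomp hh.continuousOn w hw)
  · refine ae_of_all _ fun t ht w hw => ?_
    rw [norm_mul]
    exact mul_le_mul_of_nonneg_right (hC _ (hmem w hw t (uIoc_subset_uIcc ht))) (norm_nonneg _)
  · refine ae_of_all _ fun t ht w hw => ?_
    have hwU : w + γ t ∈ U := hδU (hmem w hw t (uIoc_subset_uIcc ht))
    exact ((hh.differentiableAt (hU.mem_nhds hwU)).hasDerivAt.comp_add_const w (γ t)).mul_const
      (ψ t)

def verticalNormIntegral (h : ℂ → ℂ) (T s : ℝ) : ℝ :=
  ∫ t in (0 : ℝ)..T, ‖h (s + t * I)‖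

theorem verticalNormIntegral_nonneg {h : ℂ → ℂ} {T : ℝ} (hT : 0 ≤ T) {s : ℝ} :
    0 ≤ verticalNormIntegral h T s :=
  intervalIntegral.integral_nonneg hT fun _ _ => norm_nonneg _

theorem intervalIntegral_norm_comp_add_mul_I {h : ℂ → ℂ} {T : ℝ}
    (hper : Function.Periodic h (T * I)) (w : ℂ) :
    ∫ t in (0 : ℝ)..T, ‖h (w + t * I)‖ = verticalNormIntegral h T w.re := by
  have hline : Function.Periodic (fun t : ℝ => ‖h (w.re + t * I)‖) T := fun t => by
    simp only [ofReal_add, add_mul, ← add_assoc, hper _]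
  have hw : ∀ t : ℝ, w + t * I = w.re + ((w.im + t : ℝ) : ℂ) * I := fun t => by
    apply Complex.ext <;> simp
  simp_rw [hw]
  rw [intervalIntegral.integral_comp_add_left (fun t => ‖h (w.re + t * I)‖) w.im]
  simpa [verticalNormIntegral] using hline.intervalIntegral_add_eq w.im 0

theorem norm_intervalIntegral_mul_le_verticalNormIntegral {h : ℂ → ℂ} {T : ℝ} (hT : 0 ≤ T)
    (hper : Function.Periodic h (T * I)) {ψ : ℝ → ℂ} (hψ : ∀ t, ‖ψ t‖ ≤ 1) {w : ℂ}
    (hw : Continuous fun t : ℝ => h (w + t * I)) :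
    ‖∫ t in (0 : ℝ)..T, h (w + t * I) * ψ t‖ ≤ verticalNormIntegral h T w.re := by
  rw [← intervalIntegral_norm_comp_add_mul_I hper]
  refine intervalIntegral.norm_integral_le_of_norm_le hT (ae_of_all _ fun t _ => ?_)
    (hw.norm.intervalIntegrable _ _)
  rw [norm_mul]
  exact mul_le_of_le_one_right (norm_nonneg _) (hψ t)

theorem continuousOn_verticalNormIntegral {h : ℂ → ℂ} {s₁ s₂ : ℝ}
    (hh : ContinuousOn h (verticalClosedStrip s₁ s₂)) (T : ℝ) :
    ContinuousOn (verticalNormIntegral h T) (Icc s₁ s₂) := by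
  rcases lt_or_ge s₂ s₁ with hs | hs
  · simp [Icc_eq_empty_of_lt hs]
  -- Clamping the parameter to `[s₁, s₂]` makes the integrand continuous on all of `ℝ × ℝ`.
  have hproj : Continuous fun p : ℝ × ℝ => ‖h ((projIcc s₁ s₂ hs p.1 : ℝ) + p.2 * I)‖ :=
    (hh.comp_continuous (by fun_prop) fun p => by simp [verticalClosedStrip]).norm
  refine (intervalIntegral.continuous_parametric_intervalIntegral_of_continuous'
    (f := fun s t => ‖h ((projIcc s₁ s₂ hs s : ℝ) + t * I)‖) (μ := volume) hproj 0 T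
    ).continuousOn.congr fun s hs' => ?_
  simp [verticalNormIntegral, projIcc_of_mem hs hs']

theorem verticalNormIntegral_pos {h : ℂ → ℂ} {V : Set ℂ} (hh : AnalyticOnNhd ℂ h V)
    (hV : IsPreconnected V) {T s : ℝ} (hT : 0 < T) (hsV : ∀ t : ℝ, (s : ℂ) + t * I ∈ V)
    (hne : ∃ w ∈ V, h w ≠ 0) : 0 < verticalNormIntegral h T s := by
  have hcont : Continuous fun t : ℝ => h (s + t * I) :=
    hh.continuousOn.comp_continuous (by fun_prop) hsV
  obtain ⟨t₀, ht₀, hne₀⟩ : ∃ t₀ ∈ Ioo 0 T, h (s + t₀ * I) ≠ 0 := by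
    by_contra! hzero
    obtain ⟨w, hw, hw0⟩ := hne
    have hline : Tendsto (fun t : ℝ => (s : ℂ) + t * I) (𝓝[≠] (T / 2))
        (𝓝[≠] (s + (T / 2 : ℝ) * I)) :=
      tendsto_nhdsWithin_of_tendsto_nhds_of_eventually_within _
        ((Continuous.tendsto (by fun_prop) _).mono_left nhdsWithin_le_nhds)
        (eventually_nhdsWithin_of_forall fun t ht => by
          simpa only [mem_compl_iff, mem_singleton_iff, add_right_inj, mul_left_inj' I_ne_zero,
            ofReal_inj] using ht)
    have hzero' : ∀ᶠ t : ℝ in 𝓝[≠] (T / 2), h (s + t * I) = 0 :=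
      eventually_of_mem (mem_nhdsWithin_of_mem_nhds (Ioo_mem_nhds (half_pos hT) (half_lt_self hT)))
        hzero
    exact hw0 (hh.eqOn_zero_of_preconnected_of_frequently_eq_zero hV (hsV _)
      (hline.frequently hzero'.frequently) hw)
  rw [verticalNormIntegral, intervalIntegral.integral_pos_iff_support_of_nonneg_ae
    (ae_of_all _ fun _ => norm_nonneg _) (hcont.norm.intervalIntegrable _ _)]
  refine ⟨hT, (IsOpen.measure_pos volume (hcont.norm.isOpen_support.inter isOpen_Ioo)
    ⟨t₀, by simpa using hne₀, ht₀⟩).trans_le ?_⟩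
  exact measure_mono (inter_subset_inter_right _ Ioo_subset_Ioc_self)

theorem Measurable.exists_norm_le_one_mul_eq_norm {α : Type*} [MeasurableSpace α] {u : α → ℂ}
    (hu : Measurable u) : ∃ ψ : α → ℂ, Measurable ψ ∧ (∀ x, ‖ψ x‖ ≤ 1) ∧ ∀ x, u x * ψ x = ‖u x‖ :=
  -- where `u x = 0`, the junk value `0 / 0 = 0` makes `ψ x = 0`
  ⟨fun x => conj (u x) / ‖u x‖, (continuous_conj.measurable.comp hu).div
      (measurable_ofReal.comp hu.norm), fun x => by simpa using div_self_le_one ‖u x‖,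
    fun x => by rw [← mul_div_assoc, mul_conj', sq, mul_self_div_self]⟩

theorem norm_le_rpow_mul_rpow_of_norm_le {E : Type*} [NormedAddCommGroup E] [NormedSpace ℂ E]
    {f : ℂ → E} {J : ℝ → ℝ} {s₁ s₂ : ℝ} (hs : s₁ < s₂)
    (hf : DifferentiableOn ℂ f (verticalClosedStrip s₁ s₂)) (hJ : BddAbove (J '' Icc s₁ s₂))
    (hfJ : ∀ w ∈ verticalClosedStrip s₁ s₂, ‖f w‖ ≤ J w.re) {a b : ℝ} (ha : 0 ≤ a) (hb : 0 ≤ b)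
    (hab : a + b = 1) :
    ‖f (a * s₁ + b * s₂ : ℝ)‖ ≤ J s₁ ^ a * J s₂ ^ b := by
  obtain ⟨B, hB⟩ := hJ
  have hcl : closure (verticalStrip s₁ s₂) = verticalClosedStrip s₁ s₂ := by
    rw [verticalStrip, closure_preimage_re, closure_Ioo hs.ne]; rfl
  have hedge : ∀ {x}, x ∈ Icc s₁ s₂ → ∀ w ∈ re ⁻¹' {x}, ‖f w‖ ≤ J x := by
    rintro x hx w (rfl : w.re = x)
    exact hfJ w hx
  have hthree := norm_le_interp_of_mem_verticalClosedStrip' hs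
    (z := (a * s₁ + b * s₂ : ℝ))
    (by simpa [verticalClosedStrip] using
      convex_Icc s₁ s₂ (left_mem_Icc.2 hs.le) (right_mem_Icc.2 hs.le) ha hb hab)
    (DifferentiableOn.diffContOnCl (hcl ▸ hf))
    ⟨B, by rintro _ ⟨w, hw, rfl⟩; exact (hfJ w hw).trans (hB ⟨w.re, hw, rfl⟩)⟩
    (hedge (left_mem_Icc.2 hs.le)) (hedge (right_mem_Icc.2 hs.le))
  have hθ : (a * s₁ + b * s₂ - s₁) / (s₂ - s₁) = b := by
    rw [div_eq_iff (sub_ne_zero.2 hs.ne')]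
    linear_combination s₁ * hab
  rwa [ofReal_re, hθ, show 1 - b = a by linarith] at hthree

theorem verticalNormIntegral_le_rpow_mul_rpow {h : ℂ → ℂ} {T s₁ s₂ : ℝ} (hT : 0 ≤ T)
    (hs : s₁ < s₂) (hh : AnalyticOnNhd ℂ h (verticalClosedStrip s₁ s₂))
    (hper : Function.Periodic h (T * I)) {a b : ℝ} (ha : 0 ≤ a) (hb : 0 ≤ b) (hab : a + b = 1) :
    verticalNormIntegral h T (a * s₁ + b * s₂) ≤
      verticalNormIntegral h T s₁ ^ a * verticalNormIntegral h T s₂ ^ b := by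
  set s := a * s₁ + b * s₂
  have hline : ∀ w ∈ verticalClosedStrip s₁ s₂, Continuous fun t : ℝ => h (w + t * I) :=
    fun w hw => hh.continuousOn.comp_continuous (by fun_prop) fun t => by
      simpa [verticalClosedStrip] using hw
  have hs_mem : (s : ℂ) ∈ verticalClosedStrip s₁ s₂ := by
    simpa [verticalClosedStrip] using
      convex_Icc s₁ s₂ (left_mem_Icc.2 hs.le) (right_mem_Icc.2 hs.le) ha hb hab
  obtain ⟨ψ, hψm, hψ, hhψ⟩ := (hline s hs_mem).measurable.exists_norm_le_one_mul_eq_norm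
  have hψ_int : IntervalIntegrable ψ volume 0 T :=
    intervalIntegrable_const.mono_fun' hψm.aestronglyMeasurable (ae_of_all _ hψ)
  set Φ : ℂ → ℂ := fun w => ∫ t in (0 : ℝ)..T, h (w + t * I) * ψ t
  have hΦ : DifferentiableOn ℂ Φ (verticalClosedStrip s₁ s₂) := fun w hw =>
    (differentiableAt_intervalIntegral_comp_add_mul (isOpen_analyticAt ℂ h)
      (fun z (hz : AnalyticAt ℂ h z) => hz.differentiableAt.differentiableWithinAt) (by fun_prop)
      hψ_int fun t _ => hh _ (by simpa [verticalClosedStrip] using hw)).differentiableWithinAt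
  have hΦ_s : Φ s = verticalNormIntegral h T s := by
    simp only [Φ, hhψ]
    exact intervalIntegral.integral_ofReal
  calc verticalNormIntegral h T s = ‖Φ s‖ := by
        rw [hΦ_s, norm_real, Real.norm_of_nonneg (verticalNormIntegral_nonneg hT)]
    _ ≤ _ := norm_le_rpow_mul_rpow_of_norm_le hs hΦ
        (isCompact_Icc.bddAbove_image (continuousOn_verticalNormIntegral hh.continuousOn T))
        (fun w hw => norm_intervalIntegral_mul_le_verticalNormIntegral hT hper hψ (hline w hw))
        ha hb hab

theorem convexOn_log_of_le_rpow_mul_rpow {S : Set ℝ} {J : ℝ → ℝ} (hS : Convex ℝ S)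
    (hpos : ∀ x ∈ S, 0 < J x)
    (hJ : ∀ x ∈ S, ∀ y ∈ S, x < y → ∀ a b : ℝ, 0 < a → 0 < b → a + b = 1 →
      J (a * x + b * y) ≤ J x ^ a * J y ^ b) :
    ConvexOn ℝ S fun x => Real.log (J x) := by
  refine LinearOrder.convexOn_of_lt hS fun x hx y hy hxy a b ha hb hab => ?_
  have hJx := hpos x hx
  have hJy := hpos y hy
  calc Real.log (J (a * x + b * y))
      ≤ Real.log (J x ^ a * J y ^ b) :=
        Real.log_le_log (hpos _ (hS hx hy ha.le hb.le hab)) (hJ x hx y hy hxy a b ha hb hab)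
    _ = a * Real.log (J x) + b * Real.log (J y) := by
        rw [Real.log_mul (Real.rpow_pos_of_pos hJx a).ne' (Real.rpow_pos_of_pos hJy b).ne',
          Real.log_rpow hJx, Real.log_rpow hJy]

theorem joukowski_exp (s θ : ℝ) : joukowski (Real.exp s) θ = Complex.cosh (s + θ * I) := by
  rw [joukowski, Complex.cosh, ofReal_exp, ← Complex.exp_add, ← Complex.exp_neg]

theorem Mfun_exp (f : ℂ → ℂ) (s : ℝ) :
    Mfun f (Real.exp s) = π⁻¹ * verticalNormIntegral (f ∘ Complex.cosh) (2 * π) s := by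
  simp [Mfun, verticalNormIntegral, joukowski_exp]

theorem cosh_image_eq_ellipseRegion (R : EReal) :
    Complex.cosh '' (re ⁻¹' {s : ℝ | ((Real.exp |s| : ℝ) : EReal) < R}) = ellipseRegion R := by
  ext z
  constructor
  · rintro ⟨w, hw : ((Real.exp |w.re| : ℝ) : EReal) < R, rfl⟩
    rcases le_total 0 w.re with h | h
    · refine ⟨Real.exp w.re, w.im, Real.one_le_exp h, by rwa [abs_of_nonneg h] at hw, ?_⟩
      rw [joukowski_exp, re_add_im]
    · refine ⟨Real.exp (-w.re), -w.im, Real.one_le_exp (neg_nonneg.2 h),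
        by rwa [abs_of_nonpos h] at hw, ?_⟩
      rw [joukowski_exp, ← Complex.cosh_neg]
      congr 1
      apply Complex.ext <;> simp
  · rintro ⟨r, θ, hr, hrR, rfl⟩
    have hr0 : 0 < r := by linarith
    refine ⟨Real.log r + θ * I, ?_, ?_⟩
    · simpa [abs_of_nonneg (Real.log_nonneg hr), Real.exp_log hr0] using hrR
    · rw [← joukowski_exp, Real.exp_log hr0]

theorem ordConnected_setOf_exp_lt (R : EReal) :
    OrdConnected {s : ℝ | ((Real.exp s : ℝ) : EReal) < R} :=
  ⟨fun _ _ _ hy _ hz => lt_of_le_of_lt (EReal.coe_le_coe_iff.2 (Real.exp_le_exp.2 hz.2)) hy⟩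

theorem ordConnected_setOf_exp_abs_lt (R : EReal) :
    OrdConnected {s : ℝ | ((Real.exp |s| : ℝ) : EReal) < R} :=
  ⟨fun _ hx _ hy _ hz => lt_of_le_of_lt
    (EReal.coe_le_coe_iff.2 (Real.exp_le_exp.2 (abs_le_max_abs_abs hz.1 hz.2)))
    (max_rec' (fun m => ((Real.exp m : ℝ) : EReal) < R) hx hy)⟩

theorem log_Mfun_convex_general
    (R : EReal) (f : ℂ → ℂ)
    (hf : ∀ z ∈ ellipseRegion R, AnalyticAt ℂ f z)
    (hne : ∃ z ∈ ellipseRegion R, f z ≠ 0) :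
    ConvexOn ℝ {s : ℝ | 0 ≤ s ∧ ((Real.exp s : ℝ) : EReal) < R}
      (fun s => Real.log (Mfun f (Real.exp s))) := by
  set D := {s : ℝ | 0 ≤ s ∧ ((Real.exp s : ℝ) : EReal) < R}
  set S := {s : ℝ | ((Real.exp |s| : ℝ) : EReal) < R}
  have hDS : D ⊆ S := fun s hs => by simpa [S, abs_of_nonneg hs.1] using hs.2
  have hV : AnalyticOnNhd ℂ (f ∘ Complex.cosh) (re ⁻¹' S) := fun w hw =>
    (hf _ (cosh_image_eq_ellipseRegion R ▸ mem_image_of_mem _ hw)).comp analyticAt_cosh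
  have hstrip : ∀ {x y}, x ∈ D → y ∈ D → verticalClosedStrip x y ⊆ re ⁻¹' S :=
    fun hx hy => preimage_mono ((ordConnected_setOf_exp_abs_lt R).out (hDS hx) (hDS hy))
  rw [← cosh_image_eq_ellipseRegion, exists_mem_image] at hne
  have hpos : ∀ s ∈ D, 0 < verticalNormIntegral (f ∘ Complex.cosh) (2 * π) s := fun s hs =>
    verticalNormIntegral_pos hV ((ordConnected_setOf_exp_abs_lt R).convex.linear_preimage
      reLm).isPreconnected two_pi_pos (fun t => hstrip hs hs (by simp [verticalClosedStrip])) hne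
  have hJ := convexOn_log_of_le_rpow_mul_rpow
    (Convex.inter (convex_Ici 0) (ordConnected_setOf_exp_lt R).convex) hpos
    fun x hx y hy hxy a b ha hb hab => verticalNormIntegral_le_rpow_mul_rpow two_pi_pos.le hxy
      (hV.mono (hstrip hx hy)) (by simpa using cosh_periodic.comp f) ha.le hb.le hab
  refine (hJ.add_const (Real.log π⁻¹)).congr fun s hs => ?_
  rw [Mfun_exp, Real.log_mul (by positivity) (hpos s hs).ne']
  exact add_comm _ _

/-- if f is not identically zero, log M(ρ) is a convex function
of log ρ, i.e. s ↦ log M(eˢ) is convex on [0, log R). -/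
theorem log_Mfun_convex
    (R : EReal) (hR : 1 < R) (f : ℂ → ℂ)
    (hf : ∀ z ∈ ellipseRegion R, AnalyticAt ℂ f z)
    (hne : ∃ z ∈ ellipseRegion R, f z ≠ 0) :
    ConvexOn ℝ {s : ℝ | 0 ≤ s ∧ ((Real.exp s : ℝ) : EReal) < R}
      (fun s => Real.log (Mfun f (Real.exp s))) :=
  log_Mfun_convex_general R f hf hne
end
end
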